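/- arXiv:2402.19125 — 9 statements merged into one kernel-verified Lean document; each statement's English description precedes it below -/
import Mathlib

section
/- Let N ≥ 2 be an integer and let M ∈ ℝ^{(N−1)×(N−1)} be the one-dimensional mass matrix with entries M_{mn} = ∫_{−1}^{1} ψ_{n+1}(ξ) ψ_{m+1}(ξ) dξ for 1 ≤ m, n ≤ N−1. Then M is symmetric, and for all 1 ≤ m, n ≤ N−1: M_{nn} = (1/(2n+1))·(1/(2n−1) + 1/(2n+3)); M_{mn} = −1/(√(2n+1)·√(2n+5)·(2n+3)) whenever m = n+2; and M_{mn} = 0 whenever |m − n| ∉ {0, 2}. -/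
/-!
Differentiating the three-term recurrence gives `L_{n+2}' - L_n' = (2n+3) L_{n+1}`, and
`L_{n+2} - L_n` vanishes at `±1` because `L_n(±1) = (±1)^n`. Integrating by parts against it
therefore trades `∫ p L_{n+1}` for integrals of `p'` against `L_n` and `L_{n+2}`, so induction on
`deg p` shows that `L_n` is orthogonal to all polynomials of lower degree. The recurrence paired
with this orthogonality gives `(2n+3) ‖L_{n+1}‖² = (2n+1) ‖L_n‖²`, hence `‖L_n‖² = 2/(2n+1)`.
Since `ψ_{m+1}` is a normalized `L_{m+1} - L_{m-1}`, each mass-matrix entry is a combination of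
four such Legendre inner products.
-/

noncomputable section

open Polynomial MeasureTheory

/-- Legendre polynomials via the standard three-term recurrence,
normalized so that `legendreP m` evaluated at `1` equals `1`. -/
def legendreP : ℕ → Polynomial ℝ
  | 0 => 1
  | 1 => X
  | n + 2 => C ((2 * (n : ℝ) + 3) / ((n : ℝ) + 2)) * (X * legendreP (n + 1))
      - C (((n : ℝ) + 1) / ((n : ℝ) + 2)) * legendreP n

/-- `Lg m ξ = L_m(ξ)`, the Legendre polynomial of degree `m` evaluated at `ξ`. -/
def Lg (m : ℕ) (ξ : ℝ) : ℝ := (legendreP m).eval ξ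

/-- `phiF m ξ = φ_m(ξ) = √((2m+1)/2) L_m(ξ)`. -/
def phiF (m : ℕ) (ξ : ℝ) : ℝ := Real.sqrt ((2 * (m : ℝ) + 1) / 2) * Lg m ξ

/-- `psiF m ξ = ψ_{m+1}(ξ) = (L_{m+1}(ξ) - L_{m-1}(ξ))/√(2(2m+1))`, meaningful for `m ≥ 1`. -/
def psiF (m : ℕ) (ξ : ℝ) : ℝ :=
  (Lg (m + 1) ξ - Lg (m - 1) ξ) / Real.sqrt (2 * (2 * (m : ℝ) + 1))

open intervalIntegral

namespace Legendre

@[fun_prop]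
lemma continuous_Lg (n : ℕ) : Continuous (Lg n) := (legendreP n).continuous

/-- At `n = 0` the truncated `n - 1` is harmless: its coefficient vanishes. -/
lemma Lg_succ (n : ℕ) (x : ℝ) :
    (n + 1) * Lg (n + 1) x = (2 * n + 1) * x * Lg n x - n * Lg (n - 1) x := by
  rcases n with _ | n
  · simp [Lg, legendreP]
  · have : (n : ℝ) + 2 ≠ 0 := by positivity
    simp only [Lg, legendreP, eval_sub, eval_mul, eval_C, eval_X, Nat.add_sub_cancel]
    push_cast
    field_simp
    ring

lemma derivative_eval_succ_succ (n : ℕ) (x : ℝ) :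
    (n + 2) * (legendreP (n + 2)).derivative.eval x =
      (2 * n + 3) * (Lg (n + 1) x + x * (legendreP (n + 1)).derivative.eval x) -
        (n + 1) * (legendreP n).derivative.eval x := by
  have : (n : ℝ) + 2 ≠ 0 := by positivity
  simp only [Lg, legendreP, derivative_sub, derivative_mul, derivative_C, derivative_X, eval_sub,
    eval_add, eval_mul, eval_C, eval_X, eval_one, eval_zero]
  field_simp
  ring

lemma derivative_eval_succ (n : ℕ) (x : ℝ) :
    (legendreP (n + 1)).derivative.eval x =
        x * (legendreP n).derivative.eval x + (n + 1) * Lg n x ∧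
      x * (legendreP (n + 1)).derivative.eval x =
        (legendreP n).derivative.eval x + (n + 1) * Lg (n + 1) x := by
  induction n with
  | zero => simp [Lg, legendreP]
  | succ n ih =>
    obtain ⟨h₁, h₂⟩ := ih
    have hrec := Lg_succ (n + 1) x
    have hder := derivative_eval_succ_succ n x
    push_cast at hrec ⊢
    have h₃ : (legendreP (n + 2)).derivative.eval x =
        x * (legendreP (n + 1)).derivative.eval x + (n + 2) * Lg (n + 1) x := by
      apply mul_left_cancel₀ (by positivity : (n : ℝ) + 2 ≠ 0)
      linear_combination hder + ((n : ℝ) + 1) * h₂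
    refine ⟨by linear_combination h₃, ?_⟩
    apply mul_left_cancel₀ (by positivity : (n : ℝ) + 2 ≠ 0)
    linear_combination ((n : ℝ) + 2) * x * h₃ + ((n : ℝ) + 2) * (x * h₂ - h₁ - hrec)

lemma derivative_eval_add_two_sub (n : ℕ) (x : ℝ) :
    (legendreP (n + 2)).derivative.eval x - (legendreP n).derivative.eval x =
      (2 * n + 3) * Lg (n + 1) x := by
  have h₁ := (derivative_eval_succ (n + 1) x).1
  have h₂ := (derivative_eval_succ n x).2
  push_cast at h₁
  linear_combination h₁ + h₂

lemma Lg_one (n : ℕ) : Lg n 1 = 1 := by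
  induction n using Nat.strong_induction_on with
  | _ n ih =>
    rcases n with _ | n
    · simp [Lg, legendreP]
    · have h := Lg_succ n 1
      rw [ih n (by omega), ih (n - 1) (by omega)] at h
      apply mul_left_cancel₀ (by positivity : (n : ℝ) + 1 ≠ 0)
      linear_combination h

lemma Lg_neg_one (n : ℕ) : Lg n (-1) = (-1) ^ n := by
  induction n using Nat.strong_induction_on with
  | _ n ih =>
    rcases n with _ | _ | n
    · simp [Lg, legendreP]
    · simp [Lg, legendreP]
    · have h := Lg_succ (n + 1) (-1)
      rw [Nat.add_sub_cancel, ih (n + 1) (by omega), ih n (by omega)] at h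
      apply mul_left_cancel₀ (by positivity : ((n + 1 : ℕ) : ℝ) + 1 ≠ 0)
      linear_combination h

lemma natDegree_legendreP_le (n : ℕ) : (legendreP n).natDegree ≤ n := by
  induction n using Nat.strong_induction_on with
  | _ n ih =>
    match n with
    | 0 => simp [legendreP]
    | 1 => simp [legendreP]
    | n + 2 =>
      refine (natDegree_sub_le _ _).trans (max_le ?_ ?_)
      · refine (natDegree_C_mul_le _ _).trans (natDegree_mul_le.trans ?_)
        have := ih (n + 1) (by omega)
        simp only [natDegree_X]
        omega
      · exact (natDegree_C_mul_le _ _).trans ((ih n (by omega)).trans (by omega))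

lemma integral_eval_mul_eval_derivative (p q : ℝ[X]) {a b : ℝ}
    (ha : q.eval a = 0) (hb : q.eval b = 0) :
    ∫ x in a..b, p.eval x * q.derivative.eval x =
      -∫ x in a..b, p.derivative.eval x * q.eval x := by
  rw [integral_mul_deriv_eq_deriv_mul (fun x _ ↦ p.hasDerivAt x) (fun x _ ↦ q.hasDerivAt x)
    (p.derivative.continuous.intervalIntegrable _ _)
    (q.derivative.continuous.intervalIntegrable _ _), ha, hb]
  ring

lemma integral_mul_Lg_sub (f : ℝ → ℝ) (hf : Continuous f) (m n : ℕ) :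
    ∫ x in (-1 : ℝ)..1, f x * (Lg m x - Lg n x) =
      (∫ x in (-1 : ℝ)..1, f x * Lg m x) - ∫ x in (-1 : ℝ)..1, f x * Lg n x := by
  simp only [mul_sub]
  exact integral_sub ((hf.mul (continuous_Lg m)).intervalIntegrable _ _)
    ((hf.mul (continuous_Lg n)).intervalIntegrable _ _)

/-- Integration by parts against `L_{n+2} - L_n`, which vanishes at `±1`. -/
lemma integral_eval_mul_Lg_succ (p : ℝ[X]) (n : ℕ) :
    (2 * n + 3) * ∫ x in (-1 : ℝ)..1, p.eval x * Lg (n + 1) x =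
      (∫ x in (-1 : ℝ)..1, p.derivative.eval x * Lg n x) -
        ∫ x in (-1 : ℝ)..1, p.derivative.eval x * Lg (n + 2) x := by
  have hq (x : ℝ) : (legendreP (n + 2) - legendreP n).eval x = Lg (n + 2) x - Lg n x := by
    simp [Lg]
  have hparts := integral_eval_mul_eval_derivative p (legendreP (n + 2) - legendreP n)
    (a := -1) (b := 1) (by rw [hq, Lg_neg_one, Lg_neg_one, pow_add]; simp)
    (by rw [hq, Lg_one, Lg_one, sub_self])
  simp only [derivative_sub, eval_sub, derivative_eval_add_two_sub, hq] at hparts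
  rw [← intervalIntegral.integral_const_mul, integral_congr fun x _ ↦ mul_left_comm _ _ _, hparts,
    integral_mul_Lg_sub _ p.derivative.continuous]
  ring

theorem integral_eval_mul_Lg_eq_zero {p : ℝ[X]} {n : ℕ} (hp : p.natDegree < n) :
    ∫ x in (-1 : ℝ)..1, p.eval x * Lg n x = 0 := by
  induction hd : p.natDegree using Nat.strong_induction_on generalizing p n with
  | _ d ih =>
    obtain ⟨n, rfl⟩ : ∃ m, n = m + 1 := ⟨n - 1, by omega⟩
    have hderiv (k : ℕ) (hk : d ≤ k) :
        ∫ x in (-1 : ℝ)..1, p.derivative.eval x * Lg k x = 0 := by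
      rcases eq_or_ne d 0 with rfl | hd₀
      · simp [derivative_of_natDegree_zero hd]
      · have hlt := natDegree_derivative_lt (hd ▸ hd₀)
        exact ih _ (hd ▸ hlt) (by omega) rfl
    have h := integral_eval_mul_Lg_succ p n
    rw [hderiv n (by omega), hderiv (n + 2) (by omega), sub_self] at h
    exact (mul_eq_zero.mp h).resolve_left (by positivity)

theorem integral_Lg_mul_Lg_of_ne {m n : ℕ} (h : m ≠ n) :
    ∫ x in (-1 : ℝ)..1, Lg m x * Lg n x = 0 := by
  rcases h.lt_or_gt with h | h
  · exact integral_eval_mul_Lg_eq_zero ((natDegree_legendreP_le m).trans_lt h)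
  · simp_rw [mul_comm (Lg m _)]
    exact integral_eval_mul_Lg_eq_zero ((natDegree_legendreP_le n).trans_lt h)

lemma integral_Lg_succ_mul {f : ℝ → ℝ} (hf : Continuous f) (n : ℕ) :
    (n + 1) * ∫ x in (-1 : ℝ)..1, Lg (n + 1) x * f x =
      (2 * n + 1) * (∫ x in (-1 : ℝ)..1, x * Lg n x * f x) -
        n * ∫ x in (-1 : ℝ)..1, Lg (n - 1) x * f x := by
  simp only [← intervalIntegral.integral_const_mul]
  rw [← intervalIntegral.integral_sub (by apply Continuous.intervalIntegrable; fun_prop)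
    (by apply Continuous.intervalIntegrable; fun_prop)]
  refine integral_congr fun x _ ↦ ?_
  linear_combination f x * Lg_succ n x

theorem integral_Lg_mul_self (n : ℕ) :
    ∫ x in (-1 : ℝ)..1, Lg n x * Lg n x = 2 / (2 * n + 1) := by
  rw [eq_div_iff (by positivity)]
  induction n with
  | zero => norm_num [Lg, legendreP]
  | succ n ih =>
    have hA := integral_Lg_succ_mul (continuous_Lg (n + 1)) n
    have hB := integral_Lg_succ_mul (continuous_Lg n) (n + 1)
    rw [integral_Lg_mul_Lg_of_ne (m := n - 1) (n := n + 1) (by omega)] at hA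
    rw [integral_Lg_mul_Lg_of_ne (m := n + 1 + 1) (n := n) (by omega), Nat.add_sub_cancel] at hB
    simp_rw [mul_right_comm _ (Lg (n + 1) _) (Lg n _)] at hB
    push_cast at hB ⊢
    apply mul_left_cancel₀ (by positivity : (n : ℝ) + 1 ≠ 0)
    linear_combination (2 * (n : ℝ) + 3) * hA - (2 * (n : ℝ) + 1) * hB + ((n : ℝ) + 1) * ih

end Legendre

open Legendre

lemma integral_psiF_mul_psiF (i j : ℕ) :
    ∫ x in (-1 : ℝ)..1, psiF (i + 1) x * psiF (j + 1) x =
      ((∫ x in (-1 : ℝ)..1, Lg (i + 2) x * Lg (j + 2) x) -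
          (∫ x in (-1 : ℝ)..1, Lg (i + 2) x * Lg j x) -
          (∫ x in (-1 : ℝ)..1, Lg i x * Lg (j + 2) x) + ∫ x in (-1 : ℝ)..1, Lg i x * Lg j x) /
        (√(2 * (2 * i + 3)) * √(2 * (2 * j + 3))) := by
  have hpsi (k : ℕ) (x : ℝ) : psiF (k + 1) x = (Lg (k + 2) x - Lg k x) / √(2 * (2 * k + 3)) := by
    simp only [psiF, Nat.add_sub_cancel]
    push_cast
    ring_nf
  simp only [hpsi, div_mul_div_comm, intervalIntegral.integral_div, sub_mul, mul_sub]
  congr 1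
  rw [intervalIntegral.integral_sub, intervalIntegral.integral_sub, intervalIntegral.integral_sub]
  · ring
  all_goals apply Continuous.intervalIntegrable; fun_prop

lemma integral_psiF_mul_self (i : ℕ) :
    ∫ x in (-1 : ℝ)..1, psiF (i + 1) x * psiF (i + 1) x =
      1 / (2 * ((i : ℝ) + 1) + 1) *
        (1 / (2 * ((i : ℝ) + 1) - 1) + 1 / (2 * ((i : ℝ) + 1) + 3)) := by
  rw [integral_psiF_mul_psiF, integral_Lg_mul_Lg_of_ne (m := i + 2) (n := i) (by omega),
    integral_Lg_mul_Lg_of_ne (m := i) (n := i + 2) (by omega), integral_Lg_mul_self,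
    integral_Lg_mul_self, Real.mul_self_sqrt (by positivity)]
  push_cast
  rw [show 2 * ((i : ℝ) + 1) - 1 = 2 * i + 1 by ring]
  field_simp
  ring

lemma integral_psiF_mul_psiF_add_two (i : ℕ) :
    ∫ x in (-1 : ℝ)..1, psiF (i + 1) x * psiF (i + 2 + 1) x =
      -(1 / (√(2 * ((i : ℝ) + 1) + 1) * √(2 * ((i : ℝ) + 1) + 5) * (2 * ((i : ℝ) + 1) + 3))) := by
  rw [integral_psiF_mul_psiF, integral_Lg_mul_Lg_of_ne (m := i + 2) (n := i + 2 + 2) (by omega),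
    integral_Lg_mul_Lg_of_ne (m := i) (n := i + 2 + 2) (by omega),
    integral_Lg_mul_Lg_of_ne (m := i) (n := i + 2) (by omega), integral_Lg_mul_self,
    Real.sqrt_mul zero_le_two, Real.sqrt_mul zero_le_two]
  push_cast
  field_simp
  rw [Real.sq_sqrt zero_le_two]
  ring_nf

lemma integral_psiF_mul_psiF_eq_zero {i j : ℕ} (h : i ≠ j) (h₁ : i ≠ j + 2) (h₂ : j ≠ i + 2) :
    ∫ x in (-1 : ℝ)..1, psiF (i + 1) x * psiF (j + 1) x = 0 := by
  rw [integral_psiF_mul_psiF, integral_Lg_mul_Lg_of_ne (by omega),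
    integral_Lg_mul_Lg_of_ne (by omega), integral_Lg_mul_Lg_of_ne (by omega),
    integral_Lg_mul_Lg_of_ne h]
  simp

theorem stmt0_general (N : ℕ)
    (M : Matrix (Fin (N - 1)) (Fin (N - 1)) ℝ)
    (hM : ∀ m n : Fin (N - 1),
      M m n = ∫ ξ in (-1 : ℝ)..1, psiF ((n : ℕ) + 1) ξ * psiF ((m : ℕ) + 1) ξ) :
    M.IsSymm ∧
    (∀ n : Fin (N - 1),
      M n n = (1 / (2 * (((n : ℕ) : ℝ) + 1) + 1)) *
        (1 / (2 * (((n : ℕ) : ℝ) + 1) - 1) + 1 / (2 * (((n : ℕ) : ℝ) + 1) + 3))) ∧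
    (∀ m n : Fin (N - 1), (m : ℕ) = (n : ℕ) + 2 →
      M m n = -(1 / (Real.sqrt (2 * (((n : ℕ) : ℝ) + 1) + 1) *
        Real.sqrt (2 * (((n : ℕ) : ℝ) + 1) + 5) * (2 * (((n : ℕ) : ℝ) + 1) + 3)))) ∧
    (∀ m n : Fin (N - 1),
      (m : ℕ) ≠ (n : ℕ) → (m : ℕ) ≠ (n : ℕ) + 2 → (n : ℕ) ≠ (m : ℕ) + 2 →
      M m n = 0) := by
  refine ⟨Matrix.IsSymm.ext fun i j ↦ ?_, fun n ↦ ?_, fun m n h ↦ ?_, fun m n h h₁ h₂ ↦ ?_⟩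
  · simp only [hM, mul_comm]
  · rw [hM, integral_psiF_mul_self]
  · rw [hM, h, integral_psiF_mul_psiF_add_two]
  · rw [hM, integral_psiF_mul_psiF_eq_zero (Ne.symm h) h₂ h₁]

/-- The 1D mass matrix `M_{mn} = ∫_{-1}^{1} ψ_{n+1} ψ_{m+1}`
(indices `1 ≤ m, n ≤ N-1`, realized by `Fin (N-1)` via `m = (i : ℕ) + 1`)
is symmetric and penta-diagonal with the explicit entries of Lemma 2.1. -/
theorem stmt0 (N : ℕ) (hN : 2 ≤ N)
    (M : Matrix (Fin (N - 1)) (Fin (N - 1)) ℝ)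
    (hM : ∀ m n : Fin (N - 1),
      M m n = ∫ ξ in (-1 : ℝ)..1, psiF ((n : ℕ) + 1) ξ * psiF ((m : ℕ) + 1) ξ) :
    M.IsSymm ∧
    (∀ n : Fin (N - 1),
      M n n = (1 / (2 * (((n : ℕ) : ℝ) + 1) + 1)) *
        (1 / (2 * (((n : ℕ) : ℝ) + 1) - 1) + 1 / (2 * (((n : ℕ) : ℝ) + 1) + 3))) ∧
    (∀ m n : Fin (N - 1), (m : ℕ) = (n : ℕ) + 2 →
      M m n = -(1 / (Real.sqrt (2 * (((n : ℕ) : ℝ) + 1) + 1) *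
        Real.sqrt (2 * (((n : ℕ) : ℝ) + 1) + 5) * (2 * (((n : ℕ) : ℝ) + 1) + 3)))) ∧
    (∀ m n : Fin (N - 1),
      (m : ℕ) ≠ (n : ℕ) → (m : ℕ) ≠ (n : ℕ) + 2 → (n : ℕ) ≠ (m : ℕ) + 2 →
      M m n = 0) :=
  stmt0_general N M hM

end
end

section
/- Let n ≥ 1, let κ be a complex scalar, let M ∈ ℝ^{n×n} be symmetric and invertible, and suppose U¹, U², P, F¹, F², R ∈ ℂ^{n×n} satisfy U¹ − U² + (κU¹ + P)M = F¹, −U¹ + U² + M(κU² + P) = F², and U¹M + MU² = R. Then U¹ and U² satisfy the fully decoupled equations U¹ + M⁻¹U¹M + κU¹M = F¹ − PM + M⁻¹R and U² + MU²M⁻¹ + κMU² = F² − MP + RM⁻¹. -/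
open Matrix

/-- With `M` real symmetric invertible (viewed in `ℂ`), if
`U¹ - U² + (κU¹ + P)M = F¹`, `-U¹ + U² + M(κU² + P) = F²` and `U¹M + MU² = R`, then
`U¹ + M⁻¹U¹M + κU¹M = F¹ - PM + M⁻¹R` and `U² + MU²M⁻¹ + κMU² = F² - MP + RM⁻¹`. -/
theorem stmt11 (n : ℕ) (hn : 1 ≤ n) (κ : ℂ)
    (M : Matrix (Fin n) (Fin n) ℝ) (hMs : M.IsSymm) (hMinv : IsUnit M.det)
    (U1 U2 P F1 F2 R : Matrix (Fin n) (Fin n) ℂ)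
    (h1 : U1 - U2 + (κ • U1 + P) * M.map Complex.ofReal = F1)
    (h2 : -U1 + U2 + M.map Complex.ofReal * (κ • U2 + P) = F2)
    (h3 : U1 * M.map Complex.ofReal + M.map Complex.ofReal * U2 = R) :
    U1 + (M⁻¹).map Complex.ofReal * U1 * M.map Complex.ofReal
        + κ • (U1 * M.map Complex.ofReal)
      = F1 - P * M.map Complex.ofReal + (M⁻¹).map Complex.ofReal * R ∧
    U2 + M.map Complex.ofReal * U2 * (M⁻¹).map Complex.ofReal
        + κ • (M.map Complex.ofReal * U2)
      = F2 - M.map Complex.ofReal * P + R * (M⁻¹).map Complex.ofReal := by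
  set f := Complex.ofRealHom
  have hmap : ∀ A : Matrix (Fin n) (Fin n) ℝ, A.map Complex.ofReal = A.map f := fun _ => rfl
  set Mc := M.map Complex.ofReal with hMc
  set Nc := (M⁻¹).map Complex.ofReal with hNc
  have hMN : Mc * Nc = 1 := by
    rw [hMc, hNc, hmap, hmap, ← RingHom.mapMatrix_apply, ← RingHom.mapMatrix_apply,
      ← _root_.map_mul, Matrix.mul_nonsing_inv M hMinv, _root_.map_one]
  have hNM : Nc * Mc = 1 := by
    rw [hMc, hNc, hmap, hmap, ← RingHom.mapMatrix_apply, ← RingHom.mapMatrix_apply,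
      ← _root_.map_mul, Matrix.nonsing_inv_mul M hMinv, _root_.map_one]
  constructor
  · have hU2 : U2 = Nc * R - Nc * U1 * Mc := by
      have := congrArg (fun X => Nc * X) h3
      simp only [mul_add, ← mul_assoc, hNM, one_mul] at this
      exact eq_sub_of_add_eq' this
    rw [← h1, hU2]
    noncomm_ring
  · have hU1 : U1 = R * Nc - Mc * (U2 * Nc) := by
      have := congrArg (fun X => X * Nc) h3
      simp only [add_mul, mul_assoc, hMN, mul_one] at this
      exact eq_sub_of_add_eq this
    rw [← h2, hU1]
    noncomm_ring
end

section
/- Let M ∈ ℝ^{n×n} be symmetric positive definite with M = Q D Qᵀ, Q orthogonal, D = diag(d₁, …, d_n), d_i > 0, and let κ ∈ ℂ. Let F¹, F², P, R ∈ ℂ^{n×n} and set F̂¹ = QᵀF¹Q, F̂² = QᵀF²Q, P̂ = QᵀPQ, R̂ = QᵀRQ. Assume 1 + d_i^{−1}d_j + κd_j ≠ 0 and 1 + d_i d_j^{−1} + κd_i ≠ 0 for all i, j. Define Û¹_{ij} = (F̂¹_{ij} − P̂_{ij}d_j + d_i^{−1}R̂_{ij})/(1 + d_i^{−1}d_j +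 κd_j) and Û²_{ij} = (F̂²_{ij} − d_iP̂_{ij} + R̂_{ij}d_j^{−1})/(1 + d_i d_j^{−1} + κd_i), and set U¹ = QÛ¹Qᵀ, U² = QÛ²Qᵀ. Then U¹ solves U¹ + M⁻¹U¹M + κU¹M = F¹ − PM + M⁻¹R and U² solves U² + MU²M⁻¹ + κMU² = F² − MP + RM⁻¹, and each is the unique solution of its equation. -/
open Matrix

lemma conj_cancel' {n : ℕ} {Qc : Matrix (Fin n) (Fin n) ℂ}
    (h2 : Qcᵀ * Qc = 1) (Y : Matrix (Fin n) (Fin n) ℂ) :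
    Qcᵀ * (Qc * Y * Qcᵀ) * Qc = Y := by
  calc Qcᵀ * (Qc * Y * Qcᵀ) * Qc = Qcᵀ * (Qc * (Y * (Qcᵀ * Qc))) := by
        simp only [Matrix.mul_assoc]
    _ = Y := by rw [h2, Matrix.mul_one, ← Matrix.mul_assoc, h2, Matrix.one_mul]

lemma conj_recover {n : ℕ} {Qc : Matrix (Fin n) (Fin n) ℂ}
    (h1 : Qc * Qcᵀ = 1) (X : Matrix (Fin n) (Fin n) ℂ) :
    Qc * (Qcᵀ * X * Qc) * Qcᵀ = X := by
  calc Qc * (Qcᵀ * X * Qc) * Qcᵀ = Qc * (Qcᵀ * (X * (Qc * Qcᵀ))) := by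
        simp only [Matrix.mul_assoc]
    _ = X := by rw [h1, Matrix.mul_one, ← Matrix.mul_assoc, h1, Matrix.one_mul]

lemma aux_solve {n : ℕ} {Qc : Matrix (Fin n) (Fin n) ℂ}
    (h1 : Qc * Qcᵀ = 1) (h2 : Qcᵀ * Qc = 1)
    (L : Matrix (Fin n) (Fin n) ℂ → Matrix (Fin n) (Fin n) ℂ)
    (den : Fin n → Fin n → ℂ) (hden : ∀ i j, den i j ≠ 0)
    (hL : ∀ X : Matrix (Fin n) (Fin n) ℂ, Qcᵀ * L X * Qc
       = Matrix.of fun i j => den i j * ((Qcᵀ * X * Qc) i j))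
    (G U : Matrix (Fin n) (Fin n) ℂ)
    (hU : U = Qc * (Matrix.of fun i j => (Qcᵀ * G * Qc) i j / den i j) * Qcᵀ) :
    L U = G ∧ ∀ X, L X = G → X = U := by
  have hΦU : Qcᵀ * U * Qc = Matrix.of fun i j => (Qcᵀ * G * Qc) i j / den i j := by
    rw [hU]; exact conj_cancel' h2 _
  constructor
  · have h := hL U
    rw [hΦU] at h
    have hG : Qcᵀ * L U * Qc = Qcᵀ * G * Qc := by
      rw [h]; ext i j
      simp only [Matrix.of_apply]
      rw [mul_comm, div_mul_cancel₀ _ (hden i j)]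
    have h3 := congrArg (fun Z => Qc * Z * Qcᵀ) hG
    simpa only [conj_recover h1] using h3
  · intro X hX
    have h := hL X
    rw [hX] at h
    have hXU : Qcᵀ * X * Qc = Qcᵀ * U * Qc := by
      rw [hΦU]; ext i j
      have hh := congrFun (congrFun (congrArg (fun A => fun i j => A i j) h) i) j
      simp only [Matrix.of_apply] at hh ⊢
      rw [eq_div_iff (hden i j), mul_comm, ← hh]
    have h3 := congrArg (fun Z => Qc * Z * Qcᵀ) hXU
    simpa only [conj_recover h1] using h3

/-- With `M = Q D Qᵀ` SPD and nonvanishing denominators, the matrices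
`U¹ = Q Û¹ Qᵀ`, `U² = Q Û² Qᵀ` given by the entrywise formulas
`Û¹_{ij} = (F̂¹_{ij} - P̂_{ij} d_j + d_i⁻¹ R̂_{ij})/(1 + d_i⁻¹ d_j + κ d_j)` and
`Û²_{ij} = (F̂²_{ij} - d_i P̂_{ij} + R̂_{ij} d_j⁻¹)/(1 + d_i d_j⁻¹ + κ d_i)` are the unique
solutions of `U¹ + M⁻¹U¹M + κU¹M = F¹ - PM + M⁻¹R` and
`U² + MU²M⁻¹ + κMU² = F² - MP + RM⁻¹`, respectively. -/
theorem stmt12 (n : ℕ) (M Q : Matrix (Fin n) (Fin n) ℝ) (d : Fin n → ℝ)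
    (hd : ∀ i, 0 < d i)
    (hQ : Q * Qᵀ = 1) (hQ' : Qᵀ * Q = 1)
    (hM : M = Q * Matrix.diagonal d * Qᵀ)
    (κ : ℂ) (F1 F2 P R U1 U2 : Matrix (Fin n) (Fin n) ℂ)
    (hden1 : ∀ i j : Fin n, (1 : ℂ) + (d i : ℂ)⁻¹ * (d j : ℂ) + κ * (d j : ℂ) ≠ 0)
    (hden2 : ∀ i j : Fin n, (1 : ℂ) + (d i : ℂ) * (d j : ℂ)⁻¹ + κ * (d i : ℂ) ≠ 0)
    (hU1 : U1 = Q.map Complex.ofReal *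
      Matrix.of (fun i j =>
        (((Q.map Complex.ofReal)ᵀ * F1 * Q.map Complex.ofReal) i j
          - ((Q.map Complex.ofReal)ᵀ * P * Q.map Complex.ofReal) i j * (d j : ℂ)
          + (d i : ℂ)⁻¹ * ((Q.map Complex.ofReal)ᵀ * R * Q.map Complex.ofReal) i j)
        / ((1 : ℂ) + (d i : ℂ)⁻¹ * (d j : ℂ) + κ * (d j : ℂ))) *
      (Q.map Complex.ofReal)ᵀ)
    (hU2 : U2 = Q.map Complex.ofReal *
      Matrix.of (fun i j =>
        (((Q.map Complex.ofReal)ᵀ * F2 * Q.map Complex.ofReal) i j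
          - (d i : ℂ) * ((Q.map Complex.ofReal)ᵀ * P * Q.map Complex.ofReal) i j
          + ((Q.map Complex.ofReal)ᵀ * R * Q.map Complex.ofReal) i j * (d j : ℂ)⁻¹)
        / ((1 : ℂ) + (d i : ℂ) * (d j : ℂ)⁻¹ + κ * (d i : ℂ))) *
      (Q.map Complex.ofReal)ᵀ) :
    (U1 + (M⁻¹).map Complex.ofReal * U1 * M.map Complex.ofReal
        + κ • (U1 * M.map Complex.ofReal)
      = F1 - P * M.map Complex.ofReal + (M⁻¹).map Complex.ofReal * R) ∧
    (∀ X : Matrix (Fin n) (Fin n) ℂ,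
      X + (M⁻¹).map Complex.ofReal * X * M.map Complex.ofReal
          + κ • (X * M.map Complex.ofReal)
        = F1 - P * M.map Complex.ofReal + (M⁻¹).map Complex.ofReal * R → X = U1) ∧
    (U2 + M.map Complex.ofReal * U2 * (M⁻¹).map Complex.ofReal
        + κ • (M.map Complex.ofReal * U2)
      = F2 - M.map Complex.ofReal * P + R * (M⁻¹).map Complex.ofReal) ∧
    (∀ X : Matrix (Fin n) (Fin n) ℂ,
      X + M.map Complex.ofReal * X * (M⁻¹).map Complex.ofReal
          + κ • (M.map Complex.ofReal * X)
        = F2 - M.map Complex.ofReal * P + R * (M⁻¹).map Complex.ofReal → X = U2) := by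
  have hdne : ∀ i, d i ≠ 0 := fun i => (hd i).ne'
  set Qc : Matrix (Fin n) (Fin n) ℂ := Q.map Complex.ofReal with hQcdef
  set E : Matrix (Fin n) (Fin n) ℂ := Matrix.diagonal (fun i => (d i : ℂ)) with hEdef
  set E' : Matrix (Fin n) (Fin n) ℂ := Matrix.diagonal (fun i => (d i : ℂ)⁻¹) with hE'def
  set Mc : Matrix (Fin n) (Fin n) ℂ := M.map Complex.ofReal with hMcdef
  set Minvc : Matrix (Fin n) (Fin n) ℂ := (M⁻¹).map Complex.ofReal with hMinvcdef
  have hmapmul : ∀ A B : Matrix (Fin n) (Fin n) ℝ,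
      (A * B).map Complex.ofReal = A.map Complex.ofReal * B.map Complex.ofReal := by
    intro A B
    exact Matrix.map_mul (f := Complex.ofRealHom)
  have hmapone : (1 : Matrix (Fin n) (Fin n) ℝ).map Complex.ofReal = 1 :=
    Matrix.map_one Complex.ofReal Complex.ofReal_zero Complex.ofReal_one
  have h1c : Qc * Qcᵀ = 1 := by
    rw [hQcdef, ← Matrix.transpose_map, ← hmapmul, hQ, hmapone]
  have h2c : Qcᵀ * Qc = 1 := by
    rw [hQcdef, ← Matrix.transpose_map, ← hmapmul, hQ', hmapone]
  have hMinv : M⁻¹ = Q * Matrix.diagonal (fun i => (d i)⁻¹) * Qᵀ := by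
    apply Matrix.inv_eq_right_inv
    rw [hM]
    calc Q * Matrix.diagonal d * Qᵀ * (Q * Matrix.diagonal (fun i => (d i)⁻¹) * Qᵀ)
        = Q * (Matrix.diagonal d * ((Qᵀ * Q) * (Matrix.diagonal (fun i => (d i)⁻¹) * Qᵀ))) := by
          simp only [Matrix.mul_assoc]
      _ = Q * ((Matrix.diagonal d * Matrix.diagonal (fun i => (d i)⁻¹)) * Qᵀ) := by
          rw [hQ', Matrix.one_mul, Matrix.mul_assoc]
      _ = 1 := by
          rw [Matrix.diagonal_mul_diagonal]
          have h : (fun i => d i * (d i)⁻¹) = fun _ => (1 : ℝ) :=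
            funext fun i => mul_inv_cancel₀ (hdne i)
          rw [h, Matrix.diagonal_one, Matrix.one_mul]
          exact hQ
  have hMc : Mc = Qc * E * Qcᵀ := by
    rw [hMcdef, hM, hmapmul, hmapmul, ← Matrix.transpose_map, hEdef]
    congr 2
    rw [Matrix.diagonal_map Complex.ofReal_zero]
  have hMinvc : Minvc = Qc * E' * Qcᵀ := by
    rw [hMinvcdef, hMinv, hmapmul, hmapmul, ← Matrix.transpose_map, hE'def]
    congr 2
    rw [Matrix.diagonal_map Complex.ofReal_zero]
    simp only [Complex.ofReal_inv]
  -- sandwich lemmas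
  have sandw1 : ∀ X : Matrix (Fin n) (Fin n) ℂ,
      Minvc * X * Mc = Qc * (E' * (Qcᵀ * X * Qc) * E) * Qcᵀ := by
    intro X; rw [hMinvc, hMc]; simp only [Matrix.mul_assoc]
  have sandw2 : ∀ X : Matrix (Fin n) (Fin n) ℂ,
      X * Mc = Qc * ((Qcᵀ * X * Qc) * E) * Qcᵀ := by
    intro X
    calc X * Mc = (Qc * Qcᵀ) * (X * Mc) := by rw [h1c, Matrix.one_mul]
      _ = Qc * ((Qcᵀ * X * Qc) * E) * Qcᵀ := by rw [hMc]; simp only [Matrix.mul_assoc]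
  have sandw3 : ∀ X : Matrix (Fin n) (Fin n) ℂ,
      Minvc * X = Qc * (E' * (Qcᵀ * X * Qc)) * Qcᵀ := by
    intro X
    calc Minvc * X = (Minvc * X) * (Qc * Qcᵀ) := by rw [h1c, Matrix.mul_one]
      _ = Qc * (E' * (Qcᵀ * X * Qc)) * Qcᵀ := by rw [hMinvc]; simp only [Matrix.mul_assoc]
  have sandw4 : ∀ X : Matrix (Fin n) (Fin n) ℂ,
      Mc * X * Minvc = Qc * (E * (Qcᵀ * X * Qc) * E') * Qcᵀ := by
    intro X; rw [hMinvc, hMc]; simp only [Matrix.mul_assoc]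
  have sandw5 : ∀ X : Matrix (Fin n) (Fin n) ℂ,
      Mc * X = Qc * (E * (Qcᵀ * X * Qc)) * Qcᵀ := by
    intro X
    calc Mc * X = (Mc * X) * (Qc * Qcᵀ) := by rw [h1c, Matrix.mul_one]
      _ = Qc * (E * (Qcᵀ * X * Qc)) * Qcᵀ := by rw [hMc]; simp only [Matrix.mul_assoc]
  have sandw6 : ∀ X : Matrix (Fin n) (Fin n) ℂ,
      X * Minvc = Qc * ((Qcᵀ * X * Qc) * E') * Qcᵀ := by
    intro X
    calc X * Minvc = (Qc * Qcᵀ) * (X * Minvc) := by rw [h1c, Matrix.one_mul]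
      _ = Qc * ((Qcᵀ * X * Qc) * E') * Qcᵀ := by rw [hMinvc]; simp only [Matrix.mul_assoc]
  -- the two linear operators in diagonalized form
  have hL1 : ∀ X : Matrix (Fin n) (Fin n) ℂ,
      Qcᵀ * (X + Minvc * X * Mc + κ • (X * Mc)) * Qc
        = Matrix.of fun i j =>
            ((1 : ℂ) + (d i : ℂ)⁻¹ * (d j : ℂ) + κ * (d j : ℂ)) * ((Qcᵀ * X * Qc) i j) := by
    intro X
    rw [Matrix.mul_add, Matrix.mul_add, Matrix.add_mul, Matrix.add_mul,
      Matrix.mul_smul, Matrix.smul_mul, sandw1 X, sandw2 X,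
      conj_cancel' h2c, conj_cancel' h2c]
    ext i j
    simp only [Matrix.add_apply, Matrix.smul_apply, Matrix.of_apply, smul_eq_mul,
      hEdef, hE'def, Matrix.mul_diagonal, Matrix.diagonal_mul]
    ring
  have hL2 : ∀ X : Matrix (Fin n) (Fin n) ℂ,
      Qcᵀ * (X + Mc * X * Minvc + κ • (Mc * X)) * Qc
        = Matrix.of fun i j =>
            ((1 : ℂ) + (d i : ℂ) * (d j : ℂ)⁻¹ + κ * (d i : ℂ)) * ((Qcᵀ * X * Qc) i j) := by
    intro X
    rw [Matrix.mul_add, Matrix.mul_add, Matrix.add_mul, Matrix.add_mul,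
      Matrix.mul_smul, Matrix.smul_mul, sandw4 X, sandw5 X,
      conj_cancel' h2c, conj_cancel' h2c]
    ext i j
    simp only [Matrix.add_apply, Matrix.smul_apply, Matrix.of_apply, smul_eq_mul,
      hEdef, hE'def, Matrix.mul_diagonal, Matrix.diagonal_mul]
    ring
  -- right-hand sides in diagonalized form
  have hG1 : Qcᵀ * (F1 - P * Mc + Minvc * R) * Qc
      = Matrix.of (fun i j => (Qcᵀ * F1 * Qc) i j
          - (Qcᵀ * P * Qc) i j * (d j : ℂ)
          + (d i : ℂ)⁻¹ * (Qcᵀ * R * Qc) i j) := by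
    rw [Matrix.mul_add, Matrix.add_mul, Matrix.mul_sub, Matrix.sub_mul,
      sandw2 P, sandw3 R, conj_cancel' h2c, conj_cancel' h2c]
    ext i j
    simp only [Matrix.add_apply, Matrix.sub_apply, Matrix.of_apply,
      hEdef, hE'def, Matrix.mul_diagonal, Matrix.diagonal_mul]
  have hG2 : Qcᵀ * (F2 - Mc * P + R * Minvc) * Qc
      = Matrix.of (fun i j => (Qcᵀ * F2 * Qc) i j
          - (d i : ℂ) * (Qcᵀ * P * Qc) i j
          + (Qcᵀ * R * Qc) i j * (d j : ℂ)⁻¹) := by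
    rw [Matrix.mul_add, Matrix.add_mul, Matrix.mul_sub, Matrix.sub_mul,
      sandw5 P, sandw6 R, conj_cancel' h2c, conj_cancel' h2c]
    ext i j
    simp only [Matrix.add_apply, Matrix.sub_apply, Matrix.of_apply,
      hEdef, hE'def, Matrix.mul_diagonal, Matrix.diagonal_mul]
  have hU1' : U1 = Qc * (Matrix.of fun i j =>
      (Qcᵀ * (F1 - P * Mc + Minvc * R) * Qc) i j
        / ((1 : ℂ) + (d i : ℂ)⁻¹ * (d j : ℂ) + κ * (d j : ℂ))) * Qcᵀ := by
    rw [hU1, hG1]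
    simp only [Matrix.of_apply]
  have hU2' : U2 = Qc * (Matrix.of fun i j =>
      (Qcᵀ * (F2 - Mc * P + R * Minvc) * Qc) i j
        / ((1 : ℂ) + (d i : ℂ) * (d j : ℂ)⁻¹ + κ * (d i : ℂ))) * Qcᵀ := by
    rw [hU2, hG2]
    simp only [Matrix.of_apply]
  obtain ⟨he1, hu1⟩ := aux_solve h1c h2c
    (fun X => X + Minvc * X * Mc + κ • (X * Mc))
    (fun i j => (1 : ℂ) + (d i : ℂ)⁻¹ * (d j : ℂ) + κ * (d j : ℂ)) hden1 hL1
    (F1 - P * Mc + Minvc * R) U1 hU1'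
  obtain ⟨he2, hu2⟩ := aux_solve h1c h2c
    (fun X => X + Mc * X * Minvc + κ • (Mc * X))
    (fun i j => (1 : ℂ) + (d i : ℂ) * (d j : ℂ)⁻¹ + κ * (d i : ℂ)) hden2 hL2
    (F2 - Mc * P + R * Minvc) U2 hU2'
  exact ⟨he1, hu1, he2, hu2⟩
end

section
/- Let N ≥ 2, let M ∈ ℝ^{(N−1)×(N−1)} be symmetric positive definite with M = Q D Qᵀ, Q orthogonal, D = diag(d₁, …, d_{N−1}), d_i > 0, and let E ∈ ℝ^{(N−1)×N} be the matrix obtained from the N×N identity by deleting its first row. Consider the generalized eigenvalue problem A z = λ B z for z = (vec(U); vec(V)) with U ∈ ℝ^{N×(N−1)}, V ∈ ℝ^{(N−1)×N}, where A is the 2×2 block matrix [[I_{N−1}⊗I_N, −E⊗Eᵀ], [−Eᵀ⊗E, I_N⊗I_{N−1}]] and B = [[M⊗I_N, 0], [0, I_N⊗M]]. Writing U = [(uˣ)ᵀ; U¹] (first row uˣ ∈ ℝ^{N−1}, remaining (N−1)×(N−1) block U¹) and V = [uʸ, U²] (first column uʸ ∈ ℝ^{N−1}, remaining block U²), the following 2N(N−1)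 pairs (λ, z) all satisfy A z = λ B z, and the corresponding vectors z are linearly independent (hence form a basis of ℝ^{2N(N−1)}): (i) for 1 ≤ i, j ≤ N−1: λ = 1/d_i + 1/d_j with uˣ = uʸ = 0, U¹ = Q I_{ij} Qᵀ, U² = −(d_j/d_i) Q I_{ij} Qᵀ; (ii) for 1 ≤ j ≤ N−1: λ = 1/d_j with uˣ = Q(:,j), uʸ = 0, U¹ = U² = 0; (iii) for 1 ≤ i ≤ N−1: λ = 1/d_i with uˣ = 0, uʸ = Q(:,i), U¹ = U² = 0; (iv) for 1 ≤ i, j ≤ N−1: λ = 0 with uˣ = uʸ = 0, U¹ = U² = I_{ij}. -/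
open Matrix Kronecker

noncomputable section

set_option linter.unusedSectionVars false
set_option maxHeartbeats 1000000

/-- The matrix `E ∈ ℝ^{n×(n+1)}` obtained from the `(n+1)×(n+1)` identity by deleting
its first row: `E i j = δ_{j, i+1}`. -/
def delE (n : ℕ) : Matrix (Fin n) (Fin (n + 1)) ℝ :=
  Matrix.of fun i j => if (j : ℕ) = (i : ℕ) + 1 then 1 else 0

/-- Assemble `U = [(uˣ)ᵀ; U¹] ∈ ℝ^{(n+1)×n}`: first row `uˣ`, remaining block `U¹`. -/
def buildU (n : ℕ) (ux : Fin n → ℝ) (U1 : Matrix (Fin n) (Fin n) ℝ) :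
    Matrix (Fin (n + 1)) (Fin n) ℝ :=
  Matrix.of fun i j => Fin.cases (ux j) (fun i' => U1 i' j) i

/-- Assemble `V = [uʸ, U²] ∈ ℝ^{n×(n+1)}`: first column `uʸ`, remaining block `U²`. -/
def buildV (n : ℕ) (uy : Fin n → ℝ) (U2 : Matrix (Fin n) (Fin n) ℝ) :
    Matrix (Fin n) (Fin (n + 1)) ℝ :=
  Matrix.of fun i j => Fin.cases (uy i) (fun j' => U2 i j') j

/-- Column-major vectorization `z = (vec U; vec V)`, indexed so that
`(A ⊗ₖ B).mulVec (vec X) = vec (B * X * Aᵀ)`. -/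
def vecz (n : ℕ) (U : Matrix (Fin (n + 1)) (Fin n) ℝ) (V : Matrix (Fin n) (Fin (n + 1)) ℝ) :
    (Fin n × Fin (n + 1)) ⊕ (Fin (n + 1) × Fin n) → ℝ :=
  Sum.elim (fun p => U p.2 p.1) (fun p => V p.2 p.1)

/-- The stiffness block matrix
`A = [[I_{N-1}⊗I_N, -E⊗Eᵀ], [-Eᵀ⊗E, I_N⊗I_{N-1}]]` (here `N = n+1`). -/
def Amat (n : ℕ) :
    Matrix ((Fin n × Fin (n + 1)) ⊕ (Fin (n + 1) × Fin n))
      ((Fin n × Fin (n + 1)) ⊕ (Fin (n + 1) × Fin n)) ℝ :=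
  Matrix.fromBlocks
    ((1 : Matrix (Fin n) (Fin n) ℝ) ⊗ₖ (1 : Matrix (Fin (n + 1)) (Fin (n + 1)) ℝ))
    (-((delE n) ⊗ₖ (delE n)ᵀ))
    (-((delE n)ᵀ ⊗ₖ (delE n)))
    ((1 : Matrix (Fin (n + 1)) (Fin (n + 1)) ℝ) ⊗ₖ (1 : Matrix (Fin n) (Fin n) ℝ))

/-- The mass block matrix `B = [[M⊗I_N, 0], [0, I_N⊗M]]` (here `N = n+1`). -/
def Bmat (n : ℕ) (M : Matrix (Fin n) (Fin n) ℝ) :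
    Matrix ((Fin n × Fin (n + 1)) ⊕ (Fin (n + 1) × Fin n))
      ((Fin n × Fin (n + 1)) ⊕ (Fin (n + 1) × Fin n)) ℝ :=
  Matrix.fromBlocks
    (M ⊗ₖ (1 : Matrix (Fin (n + 1)) (Fin (n + 1)) ℝ)) 0 0
    ((1 : Matrix (Fin (n + 1)) (Fin (n + 1)) ℝ) ⊗ₖ M)

/-- Index type enumerating the `2(n+1)n` eigenpairs: interior pairs, the two edge
families, and the zero-eigenvalue pairs. -/
abbrev EigIdx (n : ℕ) := (Fin n × Fin n) ⊕ Fin n ⊕ Fin n ⊕ (Fin n × Fin n)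

/-- The eigenvalues of Theorem 2.1: `1/d_i + 1/d_j`, `1/d_j`, `1/d_i`, and `0`. -/
def lam13 (n : ℕ) (d : Fin n → ℝ) : EigIdx n → ℝ
  | Sum.inl p => 1 / d p.1 + 1 / d p.2
  | Sum.inr (Sum.inl j) => 1 / d j
  | Sum.inr (Sum.inr (Sum.inl i)) => 1 / d i
  | Sum.inr (Sum.inr (Sum.inr _)) => 0

/-- The corresponding eigenvectors of Theorem 2.1. -/
def zfam13 (n : ℕ) (d : Fin n → ℝ) (Q : Matrix (Fin n) (Fin n) ℝ) :
    EigIdx n → ((Fin n × Fin (n + 1)) ⊕ (Fin (n + 1) × Fin n) → ℝ)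
  | Sum.inl p =>
      vecz n (buildU n 0 (Q * Matrix.single p.1 p.2 1 * Qᵀ))
        (buildV n 0 ((-(d p.2 / d p.1)) • (Q * Matrix.single p.1 p.2 1 * Qᵀ)))
  | Sum.inr (Sum.inl j) => vecz n (buildU n (fun k => Q k j) 0) (buildV n 0 0)
  | Sum.inr (Sum.inr (Sum.inl i)) => vecz n (buildU n 0 0) (buildV n (fun k => Q k i) 0)
  | Sum.inr (Sum.inr (Sum.inr p)) =>
      vecz n (buildU n 0 (Matrix.single p.1 p.2 1))
        (buildV n 0 (Matrix.single p.1 p.2 1))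

section Aux

variable {n : ℕ} {m : Type*} [Fintype m] [DecidableEq m]

lemma delE_apply (i : Fin n) (j : Fin (n+1)) : delE n i j = if j = i.succ then 1 else 0 := by
  simp only [delE, of_apply, Fin.ext_iff, Fin.val_succ]

lemma delE_mul (X : Matrix (Fin (n+1)) m ℝ) :
    delE n * X = Matrix.of fun i j => X i.succ j := by
  ext i j; simp [mul_apply, delE_apply, ite_mul]

lemma mul_delE_T (X : Matrix m (Fin (n+1)) ℝ) :
    X * (delE n)ᵀ = Matrix.of fun i j => X i j.succ := by
  ext i j; simp [mul_apply, delE_apply, transpose_apply, mul_ite]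

-- buildU/buildV apply lemmas
@[simp] lemma buildU_zero (ux U1) (j : Fin n) : buildU n ux U1 0 j = ux j := rfl
@[simp] lemma buildU_succ (ux U1) (i j : Fin n) : buildU n ux U1 i.succ j = U1 i j := rfl
@[simp] lemma buildV_zero (uy U2) (i : Fin n) : buildV n uy U2 i 0 = uy i := rfl
@[simp] lemma buildV_succ (uy U2) (i j : Fin n) : buildV n uy U2 i j.succ = U2 i j := rfl

lemma ETVET (uy : Fin n → ℝ) (U2 : Matrix (Fin n) (Fin n) ℝ) :
    (delE n)ᵀ * buildV n uy U2 * (delE n)ᵀ = buildU n 0 U2 := by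
  ext i j
  rw [mul_delE_T]
  induction i using Fin.cases with
  | zero =>
    have : ((delE n)ᵀ * buildV n uy U2) 0 j.succ = 0 := by
      simp [mul_apply, delE_apply, transpose_apply, ite_mul, eq_comm, Fin.succ_ne_zero]
    simpa using this
  | succ i' =>
    have : ((delE n)ᵀ * buildV n uy U2) i'.succ j.succ = U2 i' j := by
      simp [mul_apply, delE_apply, transpose_apply, ite_mul, Fin.succ_inj]
    simpa using this

lemma EUE (ux : Fin n → ℝ) (U1 : Matrix (Fin n) (Fin n) ℝ) :
    delE n * buildU n ux U1 * delE n = buildV n 0 U1 := by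
  ext i j
  rw [delE_mul]
  induction j using Fin.cases with
  | zero =>
    have : ((Matrix.of fun i j => buildU n ux U1 i.succ j : Matrix (Fin n) (Fin n) ℝ) * delE n) i 0 = 0 := by
      simp [mul_apply, delE_apply, mul_ite, eq_comm, Fin.succ_ne_zero]
    simpa using this
  | succ j' =>
    have : ((Matrix.of fun i j => buildU n ux U1 i.succ j : Matrix (Fin n) (Fin n) ℝ) * delE n) i j'.succ = U1 i j' := by
      simp [mul_apply, delE_apply, mul_ite, Fin.succ_inj]
    simpa using this

lemma buildU_mul (ux : Fin n → ℝ) (U1 M : Matrix (Fin n) (Fin n) ℝ) :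
    buildU n ux U1 * M = buildU n (ux ᵥ* M) (U1 * M) := by
  ext i j
  induction i using Fin.cases with
  | zero => simp [mul_apply, vecMul, dotProduct]
  | succ i' => simp [mul_apply]

lemma mul_buildV (uy : Fin n → ℝ) (U2 M : Matrix (Fin n) (Fin n) ℝ) :
    M * buildV n uy U2 = buildV n (M *ᵥ uy) (M * U2) := by
  ext i j
  induction j using Fin.cases with
  | zero => simp [mul_apply, mulVec, dotProduct]
  | succ j' => simp [mul_apply]

lemma buildU_sub (a b : Fin n → ℝ) (A B : Matrix (Fin n) (Fin n) ℝ) :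
    buildU n a A - buildU n b B = buildU n (a - b) (A - B) := by
  ext i j
  induction i using Fin.cases with
  | zero => simp
  | succ i' => simp

lemma buildU_smul (c : ℝ) (a : Fin n → ℝ) (A : Matrix (Fin n) (Fin n) ℝ) :
    c • buildU n a A = buildU n (c • a) (c • A) := by
  ext i j
  induction i using Fin.cases with
  | zero => simp
  | succ i' => simp

lemma buildV_sub (a b : Fin n → ℝ) (A B : Matrix (Fin n) (Fin n) ℝ) :
    buildV n a A - buildV n b B = buildV n (a - b) (A - B) := by
  ext i j
  induction j using Fin.cases with
  | zero => simp
  | succ j' => simp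

lemma buildV_smul (c : ℝ) (a : Fin n → ℝ) (A : Matrix (Fin n) (Fin n) ℝ) :
    c • buildV n a A = buildV n (c • a) (c • A) := by
  ext i j
  induction j using Fin.cases with
  | zero => simp
  | succ j' => simp

lemma buildU_congr {a b : Fin n → ℝ} {A B : Matrix (Fin n) (Fin n) ℝ}
    (h1 : a = b) (h2 : A = B) : buildU n a A = buildU n b B := by rw [h1, h2]

lemma buildV_congr {a b : Fin n → ℝ} {A B : Matrix (Fin n) (Fin n) ℝ}
    (h1 : a = b) (h2 : A = B) : buildV n a A = buildV n b B := by rw [h1, h2]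

lemma kron_mulVec {m₁ n₁ m₂ n₂ : Type*} [Fintype n₁] [Fintype n₂]
    (A : Matrix m₁ n₁ ℝ) (B : Matrix m₂ n₂ ℝ) (X : Matrix n₂ n₁ ℝ) (q : m₁ × m₂) :
    (A ⊗ₖ B).mulVec (fun p => X p.2 p.1) q = (B * X * Aᵀ) q.2 q.1 := by
  simp only [mulVec, dotProduct, mul_apply, kroneckerMap_apply, transpose_apply,
    Fintype.sum_prod_type, Finset.sum_mul, Finset.mul_sum]
  exact Finset.sum_congr rfl fun c _ => Finset.sum_congr rfl fun r _ => by ring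

lemma vecz_smul (c : ℝ) (U V) : c • vecz n U V = vecz n (c • U) (c • V) := by
  funext q; cases q <;> rfl

lemma vecz_congr {U U' V V'} (h1 : U = U') (h2 : V = V') :
    vecz n U V = vecz n U' V' := by rw [h1, h2]

lemma Amat_mulVec (U : Matrix (Fin (n+1)) (Fin n) ℝ) (V : Matrix (Fin n) (Fin (n+1)) ℝ) :
    (Amat n).mulVec (vecz n U V)
      = vecz n (U - (delE n)ᵀ * V * (delE n)ᵀ) (V - delE n * U * delE n) := by
  funext q
  cases q with
  | inl q =>
    have : (Amat n).mulVec (vecz n U V) (Sum.inl q)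
        = ((1 : Matrix (Fin n) (Fin n) ℝ) ⊗ₖ (1 : Matrix (Fin (n+1)) (Fin (n+1)) ℝ)).mulVec
            (fun p => U p.2 p.1) q
          + (-((delE n) ⊗ₖ (delE n)ᵀ)).mulVec (fun p => V p.2 p.1) q := by
      rw [Amat, show vecz n U V = Sum.elim (fun p => U p.2 p.1) (fun p => V p.2 p.1) from rfl,
        fromBlocks_mulVec]
      rfl
    rw [this, one_kronecker_one, one_mulVec, neg_mulVec, Pi.neg_apply,
      kron_mulVec (delE n) (delE n)ᵀ V q]
    simp [vecz, sub_eq_add_neg]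
  | inr q =>
    have : (Amat n).mulVec (vecz n U V) (Sum.inr q)
        = (-((delE n)ᵀ ⊗ₖ (delE n))).mulVec (fun p => U p.2 p.1) q
          + ((1 : Matrix (Fin (n+1)) (Fin (n+1)) ℝ) ⊗ₖ (1 : Matrix (Fin n) (Fin n) ℝ)).mulVec
            (fun p => V p.2 p.1) q := by
      rw [Amat, show vecz n U V = Sum.elim (fun p => U p.2 p.1) (fun p => V p.2 p.1) from rfl,
        fromBlocks_mulVec]
      rfl
    rw [this, one_kronecker_one, one_mulVec, neg_mulVec, Pi.neg_apply,
      kron_mulVec (delE n)ᵀ (delE n) U q]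
    have h2 : ((delE n)ᵀ)ᵀ = delE n := transpose_transpose _
    rw [h2]
    simp [vecz, sub_eq_add_neg, add_comm]

lemma Bmat_mulVec (M : Matrix (Fin n) (Fin n) ℝ)
    (U : Matrix (Fin (n+1)) (Fin n) ℝ) (V : Matrix (Fin n) (Fin (n+1)) ℝ) :
    (Bmat n M).mulVec (vecz n U V) = vecz n (U * Mᵀ) (M * V) := by
  funext q
  cases q with
  | inl q =>
    have : (Bmat n M).mulVec (vecz n U V) (Sum.inl q)
        = (M ⊗ₖ (1 : Matrix (Fin (n+1)) (Fin (n+1)) ℝ)).mulVec (fun p => U p.2 p.1) q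
          + (0 : Matrix (Fin n × Fin (n+1)) (Fin (n+1) × Fin n) ℝ).mulVec
              (fun p => V p.2 p.1) q := by
      rw [Bmat, show vecz n U V = Sum.elim (fun p => U p.2 p.1) (fun p => V p.2 p.1) from rfl,
        fromBlocks_mulVec]
      rfl
    rw [this, kron_mulVec M 1 U q, zero_mulVec]
    simp [vecz]
  | inr q =>
    have : (Bmat n M).mulVec (vecz n U V) (Sum.inr q)
        = (0 : Matrix (Fin (n+1) × Fin n) (Fin n × Fin (n+1)) ℝ).mulVec
              (fun p => U p.2 p.1) q
          + ((1 : Matrix (Fin (n+1)) (Fin (n+1)) ℝ) ⊗ₖ M).mulVec (fun p => V p.2 p.1) q := by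
      rw [Bmat, show vecz n U V = Sum.elim (fun p => U p.2 p.1) (fun p => V p.2 p.1) from rfl,
        fromBlocks_mulVec]
      rfl
    rw [this, kron_mulVec 1 M V q, zero_mulVec, transpose_one, Matrix.mul_one]
    simp [vecz]

-- std basis / diagonal algebra
lemma std_mul_diagonal (d : Fin n → ℝ) (a b : Fin n) :
    Matrix.single a b (1:ℝ) * Matrix.diagonal d = d b • Matrix.single a b 1 := by
  ext i j
  simp only [Matrix.mul_diagonal, Matrix.smul_apply, Matrix.single, of_apply,
    smul_eq_mul]
  by_cases h1 : a = i <;> by_cases h2 : b = j <;> simp [h1, h2]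

lemma diagonal_mul_std (d : Fin n → ℝ) (a b : Fin n) :
    Matrix.diagonal d * Matrix.single a b (1:ℝ) = d a • Matrix.single a b 1 := by
  ext i j
  simp only [Matrix.diagonal_mul, Matrix.smul_apply, Matrix.single, of_apply,
    smul_eq_mul]
  by_cases h1 : a = i <;> by_cases h2 : b = j <;> simp [h1, h2]

lemma QEQ_apply (Q : Matrix (Fin n) (Fin n) ℝ) (a b i j : Fin n) :
    (Q * (Matrix.single a b 1 : Matrix (Fin n) (Fin n) ℝ) * Qᵀ) i j
      = Q i a * Q j b := by
  simp [mul_apply, Matrix.single, transpose_apply, ite_and, mul_ite, ite_mul,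
    Finset.sum_ite_eq, Finset.sum_ite_eq']

end Aux

/-- For the generalized eigenvalue problem `A z = λ B z` of the 2D
Maxwell spectral discretization (with `M = Q D Qᵀ` SPD, `Q` orthogonal, `d i > 0`),
the `2(n+1)n` pairs `(lam13, zfam13)` all satisfy `A z = λ B z`, and the vectors are
linearly independent (hence form a basis of `ℝ^{2(n+1)n}`). Here `N = n + 1 ≥ 2`. -/
theorem stmt13 (n : ℕ) (hn : 1 ≤ n)
    (M Q : Matrix (Fin n) (Fin n) ℝ) (d : Fin n → ℝ)
    (hd : ∀ i, 0 < d i)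
    (hQ : Q * Qᵀ = 1) (hQ' : Qᵀ * Q = 1)
    (hM : M = Q * Matrix.diagonal d * Qᵀ) :
    (∀ idx : EigIdx n,
      (Amat n).mulVec (zfam13 n d Q idx)
        = lam13 n d idx • (Bmat n M).mulVec (zfam13 n d Q idx)) ∧
    LinearIndependent ℝ (zfam13 n d Q) := by
  have hd0 : ∀ i, d i ≠ 0 := fun i => (hd i).ne'
  have Msym : Mᵀ = M := by
    rw [hM]
    simp [Matrix.transpose_mul, Matrix.diagonal_transpose, Matrix.mul_assoc]
  -- key algebra: S := Q E Qᵀ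
  have SM : ∀ a b : Fin n, (Q * Matrix.single a b 1 * Qᵀ) * M
      = d b • (Q * Matrix.single a b 1 * Qᵀ) := by
    intro a b
    rw [hM]
    calc (Q * Matrix.single a b 1 * Qᵀ) * (Q * Matrix.diagonal d * Qᵀ)
        = Q * (Matrix.single a b 1 * (Qᵀ * Q) * Matrix.diagonal d) * Qᵀ := by
          simp only [Matrix.mul_assoc]
      _ = Q * (Matrix.single a b 1 * Matrix.diagonal d) * Qᵀ := by
          rw [hQ', Matrix.mul_one]
      _ = d b • (Q * Matrix.single a b 1 * Qᵀ) := by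
          rw [std_mul_diagonal]
          simp only [Matrix.mul_smul, Matrix.smul_mul, Matrix.mul_assoc]
  have MS : ∀ a b : Fin n, M * (Q * Matrix.single a b 1 * Qᵀ)
      = d a • (Q * Matrix.single a b 1 * Qᵀ) := by
    intro a b
    rw [hM]
    calc (Q * Matrix.diagonal d * Qᵀ) * (Q * Matrix.single a b 1 * Qᵀ)
        = Q * (Matrix.diagonal d * (Qᵀ * Q) * Matrix.single a b 1) * Qᵀ := by
          simp only [Matrix.mul_assoc]
      _ = Q * (Matrix.diagonal d * Matrix.single a b 1) * Qᵀ := by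
          rw [hQ', Matrix.mul_one]
      _ = d a • (Q * Matrix.single a b 1 * Qᵀ) := by
          rw [diagonal_mul_std]
          simp only [Matrix.mul_smul, Matrix.smul_mul, Matrix.mul_assoc]
  have Mcol : ∀ j : Fin n, M *ᵥ (fun k => Q k j) = d j • (fun k => Q k j) := by
    intro j
    have hc : (fun k => Q k j) = Q *ᵥ Pi.single j 1 := by
      funext k; simp [Matrix.mulVec_single]
    rw [hc, Matrix.mulVec_mulVec]
    have hMQ : M * Q = Q * Matrix.diagonal d := by
      rw [hM]
      calc Q * Matrix.diagonal d * Qᵀ * Q = Q * Matrix.diagonal d * (Qᵀ * Q) := by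
            simp only [Matrix.mul_assoc]
        _ = Q * Matrix.diagonal d := by rw [hQ', Matrix.mul_one]
    rw [hMQ, ← Matrix.mulVec_mulVec, Matrix.diagonal_mulVec_single, mul_one]
    funext k
    simp [Matrix.mulVec_single, mul_comm]
  constructor
  · intro idx
    match idx with
    | Sum.inl p =>
      simp only [zfam13, lam13]
      rw [Amat_mulVec, Bmat_mulVec, Msym, vecz_smul]
      refine vecz_congr ?_ ?_
      · rw [ETVET, buildU_sub, buildU_mul, buildU_smul]
        refine buildU_congr (by simp) ?_
        rw [SM p.1 p.2, smul_smul]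
        have hsc : (1 / d p.1 + 1 / d p.2) * d p.2 = 1 - (-(d p.2 / d p.1)) := by
          field_simp [hd0 p.1, hd0 p.2] <;> ring
        rw [hsc, sub_smul, one_smul]
      · rw [EUE, buildV_sub, mul_buildV, buildV_smul]
        refine buildV_congr (by simp) ?_
        rw [Matrix.mul_smul, MS p.1 p.2, smul_smul, smul_smul]
        have hsc : (1 / d p.1 + 1 / d p.2) * -(d p.2 / d p.1) * d p.1
            = -(d p.2 / d p.1) - 1 := by
          field_simp [hd0 p.1, hd0 p.2] <;> ring
        rw [hsc, sub_smul, one_smul]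
    | Sum.inr (Sum.inl j) =>
      simp only [zfam13, lam13]
      rw [Amat_mulVec, Bmat_mulVec, Msym, vecz_smul]
      refine vecz_congr ?_ ?_
      · rw [ETVET, buildU_sub, buildU_mul, buildU_smul]
        refine buildU_congr ?_ (by simp)
        have hv : (fun k => Q k j) ᵥ* M = d j • (fun k => Q k j) := by
          rw [← Msym, Matrix.vecMul_transpose, Mcol j]
        rw [hv, smul_smul, sub_zero, one_div, inv_mul_cancel₀ (hd0 j), one_smul]
      · rw [EUE, buildV_sub, mul_buildV, buildV_smul]
        exact buildV_congr (by simp) (by simp)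
    | Sum.inr (Sum.inr (Sum.inl i)) =>
      simp only [zfam13, lam13]
      rw [Amat_mulVec, Bmat_mulVec, Msym, vecz_smul]
      refine vecz_congr ?_ ?_
      · rw [ETVET, buildU_sub, buildU_mul, buildU_smul]
        exact buildU_congr (by simp) (by simp)
      · rw [EUE, buildV_sub, mul_buildV, buildV_smul]
        refine buildV_congr ?_ (by simp)
        rw [Mcol i, smul_smul, sub_zero, one_div, inv_mul_cancel₀ (hd0 i), one_smul]
    | Sum.inr (Sum.inr (Sum.inr p)) =>
      simp only [zfam13, lam13]
      rw [Amat_mulVec, Bmat_mulVec, Msym, vecz_smul]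
      refine vecz_congr ?_ ?_
      · rw [ETVET, buildU_sub, buildU_mul, buildU_smul]
        exact buildU_congr (by simp) (by simp)
      · rw [EUE, buildV_sub, mul_buildV, buildV_smul]
        exact buildV_congr (by simp) (by simp)
  · rw [Fintype.linearIndependent_iff]
    intro g hg
    have key : ∀ c, ∑ idx : EigIdx n, g idx * zfam13 n d Q idx c = 0 := by
      intro c
      have := congrFun hg c
      simpa [Finset.sum_apply, Pi.smul_apply, smul_eq_mul] using this
    -- split sums
    have key' : ∀ c, (∑ p : Fin n × Fin n, g (Sum.inl p) * zfam13 n d Q (Sum.inl p) c)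
        + ((∑ j : Fin n, g (Sum.inr (Sum.inl j)) * zfam13 n d Q (Sum.inr (Sum.inl j)) c)
        + ((∑ i : Fin n, g (Sum.inr (Sum.inr (Sum.inl i)))
              * zfam13 n d Q (Sum.inr (Sum.inr (Sum.inl i))) c)
        + (∑ p : Fin n × Fin n, g (Sum.inr (Sum.inr (Sum.inr p)))
              * zfam13 n d Q (Sum.inr (Sum.inr (Sum.inr p))) c))) = 0 := by
      intro c
      have := key c
      rwa [Fintype.sum_sum_type, Fintype.sum_sum_type, Fintype.sum_sum_type] at this
    -- g2 = 0
    have hg2 : ∀ j : Fin n, g (Sum.inr (Sum.inl j)) = 0 := by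
      have hQv : ∀ j₀ : Fin n, ∑ j, Q j₀ j * g (Sum.inr (Sum.inl j)) = 0 := by
        intro j₀
        have := key' (Sum.inl (j₀, 0))
        simp only [zfam13, vecz, Sum.elim_inl, buildU_zero, Pi.zero_apply, mul_zero,
          Finset.sum_const_zero, zero_add, add_zero] at this
        calc ∑ j, Q j₀ j * g (Sum.inr (Sum.inl j))
            = ∑ j, g (Sum.inr (Sum.inl j)) * Q j₀ j := by
              exact Finset.sum_congr rfl fun j _ => mul_comm _ _
          _ = 0 := this
      intro j
      have h1 : Q *ᵥ (fun j => g (Sum.inr (Sum.inl j))) = 0 := by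
        funext j₀
        simpa [Matrix.mulVec, dotProduct] using hQv j₀
      have h2 : (fun j => g (Sum.inr (Sum.inl j))) = Qᵀ *ᵥ (Q *ᵥ fun j => g (Sum.inr (Sum.inl j))) := by
        rw [Matrix.mulVec_mulVec, hQ', Matrix.one_mulVec]
      have h3 : Qᵀ *ᵥ (Q *ᵥ fun j => g (Sum.inr (Sum.inl j))) = 0 := by
        rw [h1, Matrix.mulVec_zero]
      exact congrFun (h2.trans h3) j
    -- g3 = 0
    have hg3 : ∀ i : Fin n, g (Sum.inr (Sum.inr (Sum.inl i))) = 0 := by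
      have hQv : ∀ i₀ : Fin n, ∑ i, Q i₀ i * g (Sum.inr (Sum.inr (Sum.inl i))) = 0 := by
        intro i₀
        have := key' (Sum.inr (0, i₀))
        simp only [zfam13, vecz, Sum.elim_inr, buildV_zero, Pi.zero_apply, mul_zero,
          Finset.sum_const_zero, zero_add, add_zero] at this
        calc ∑ i, Q i₀ i * g (Sum.inr (Sum.inr (Sum.inl i)))
            = ∑ i, g (Sum.inr (Sum.inr (Sum.inl i))) * Q i₀ i := by
              exact Finset.sum_congr rfl fun i _ => mul_comm _ _
          _ = 0 := this
      intro i
      have h1 : Q *ᵥ (fun i => g (Sum.inr (Sum.inr (Sum.inl i)))) = 0 := by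
        funext i₀
        simpa [Matrix.mulVec, dotProduct] using hQv i₀
      have h2 : (fun i => g (Sum.inr (Sum.inr (Sum.inl i))))
          = Qᵀ *ᵥ (Q *ᵥ fun i => g (Sum.inr (Sum.inr (Sum.inl i)))) := by
        rw [Matrix.mulVec_mulVec, hQ', Matrix.one_mulVec]
      have h3 : Qᵀ *ᵥ (Q *ᵥ fun i => g (Sum.inr (Sum.inr (Sum.inl i)))) = 0 := by
        rw [h1, Matrix.mulVec_zero]
      exact congrFun (h2.trans h3) i
    -- interior equations
    have E1 : ∀ a b : Fin n,
        (∑ p : Fin n × Fin n, g (Sum.inl p) * (Q a p.1 * Q b p.2))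
          + g (Sum.inr (Sum.inr (Sum.inr (a, b)))) = 0 := by
      intro a b
      have := key' (Sum.inl (b, Fin.succ a))
      simp only [zfam13, vecz, Sum.elim_inl, buildU_succ, Pi.zero_apply, Matrix.zero_apply,
        mul_zero, Finset.sum_const_zero, zero_add, add_zero, QEQ_apply] at this
      have hstd : ∑ p : Fin n × Fin n,
          g (Sum.inr (Sum.inr (Sum.inr p))) * Matrix.single p.1 p.2 (1:ℝ) a b
          = g (Sum.inr (Sum.inr (Sum.inr (a, b)))) := by
        rw [Fintype.sum_prod_type]
        simp [Matrix.single, ite_and, mul_ite, Finset.sum_ite_eq, Finset.sum_ite_eq']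
      rw [hstd] at this
      exact this
    have E2 : ∀ a b : Fin n,
        (∑ p : Fin n × Fin n, g (Sum.inl p) * (-(d p.2 / d p.1) * (Q a p.1 * Q b p.2)))
          + g (Sum.inr (Sum.inr (Sum.inr (a, b)))) = 0 := by
      intro a b
      have := key' (Sum.inr (Fin.succ b, a))
      simp only [zfam13, vecz, Sum.elim_inr, buildV_succ, Pi.zero_apply, Matrix.zero_apply,
        mul_zero, Finset.sum_const_zero, zero_add, add_zero, Matrix.smul_apply, QEQ_apply,
        smul_eq_mul] at this
      have hstd : ∑ p : Fin n × Fin n,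
          g (Sum.inr (Sum.inr (Sum.inr p))) * Matrix.single p.1 p.2 (1:ℝ) a b
          = g (Sum.inr (Sum.inr (Sum.inr (a, b)))) := by
        rw [Fintype.sum_prod_type]
        simp [Matrix.single, ite_and, mul_ite, Finset.sum_ite_eq, Finset.sum_ite_eq']
      rw [hstd] at this
      exact this
    -- subtract
    have Esub : ∀ a b : Fin n,
        ∑ p : Fin n × Fin n,
          (g (Sum.inl p) * (1 + d p.2 / d p.1)) * (Q a p.1 * Q b p.2) = 0 := by
      intro a b
      have h := congrArg₂ (· - ·) (E1 a b) (E2 a b)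
      simp only [add_sub_add_right_eq_sub, sub_zero, ← Finset.sum_sub_distrib] at h
      calc ∑ p : Fin n × Fin n, (g (Sum.inl p) * (1 + d p.2 / d p.1)) * (Q a p.1 * Q b p.2)
          = ∑ p : Fin n × Fin n, (g (Sum.inl p) * (Q a p.1 * Q b p.2)
              - g (Sum.inl p) * (-(d p.2 / d p.1) * (Q a p.1 * Q b p.2))) := by
            exact Finset.sum_congr rfl fun p _ => by ring
        _ = 0 := h
    -- Q * H * Qᵀ = 0
    set H : Matrix (Fin n) (Fin n) ℝ :=
      Matrix.of (fun a b => g (Sum.inl (a, b)) * (1 + d b / d a)) with hH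
    have hQHQ : Q * H * Qᵀ = 0 := by
      ext a b
      have := Esub a b
      rw [Fintype.sum_prod_type] at this
      simp only [Matrix.zero_apply, mul_apply, transpose_apply, hH, of_apply,
        Finset.sum_mul]
      calc ∑ c, ∑ k, Q a k * (g (Sum.inl (k, c)) * (1 + d c / d k)) * Q b c
          = ∑ k, ∑ c, (g (Sum.inl (k, c)) * (1 + d c / d k)) * (Q a k * Q b c) := by
            rw [Finset.sum_comm]
            exact Finset.sum_congr rfl fun k _ => Finset.sum_congr rfl fun c _ => by ring
        _ = 0 := this
    have hH0 : H = 0 := by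
      calc H = (Qᵀ * Q) * H * (Qᵀ * Q) := by rw [hQ']; simp
        _ = Qᵀ * (Q * H * Qᵀ) * Q := by simp only [Matrix.mul_assoc]
        _ = 0 := by rw [hQHQ]; simp
    have hg1 : ∀ p : Fin n × Fin n, g (Sum.inl p) = 0 := by
      intro p
      have := congrFun (congrFun hH0 p.1) p.2
      simp only [hH, of_apply, Matrix.zero_apply] at this
      have hpos : (1 : ℝ) + d p.2 / d p.1 ≠ 0 := by
        have : 0 < d p.2 / d p.1 := div_pos (hd p.2) (hd p.1)
        positivity
      exact (mul_eq_zero.mp this).resolve_right hpos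
    have hg4 : ∀ p : Fin n × Fin n, g (Sum.inr (Sum.inr (Sum.inr p))) = 0 := by
      intro p
      have := E1 p.1 p.2
      simp only [hg1, zero_mul, Finset.sum_const_zero, zero_add] at this
      simpa using this
    intro i
    match i with
    | Sum.inl p => exact hg1 p
    | Sum.inr (Sum.inl j) => exact hg2 j
    | Sum.inr (Sum.inr (Sum.inl i)) => exact hg3 i
    | Sum.inr (Sum.inr (Sum.inr p)) => exact hg4 p
end
end

section
/- Let n ≥ 1, let M ∈ ℝ^{n×n}, let λ be a nonzero scalar, and suppose U¹, U² ∈ ℝ^{n×n} satisfy U¹ − U² = λ U¹M and −U¹ + U² = λ M U². Then U¹M + MU² = 0. In particular, every eigen-solution of the discrete 2D Maxwell eigenvalue system with nonzero eigenvalue automatically satisfies the discrete divergence-free (Gauss law) constraint. -/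
open Matrix

/-- If `U¹ - U² = λU¹M` and `-U¹ + U² = λMU²` with `λ ≠ 0`, then
`U¹M + MU² = 0`: eigen-solutions of the discrete 2D Maxwell eigenvalue system with
nonzero eigenvalue automatically satisfy the discrete divergence-free constraint. -/
theorem stmt14 (n : ℕ) (hn : 1 ≤ n)
    (M : Matrix (Fin n) (Fin n) ℝ) (lam : ℝ) (hlam : lam ≠ 0)
    (U1 U2 : Matrix (Fin n) (Fin n) ℝ)
    (h1 : U1 - U2 = lam • (U1 * M))
    (h2 : -U1 + U2 = lam • (M * U2)) :
    U1 * M + M * U2 = 0 := by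
  have h : lam • (U1 * M + M * U2) = 0 := by
    rw [smul_add, ← h1, ← h2]; abel
  exact (smul_eq_zero.mp h).resolve_left hlam
end

section
/- Let n ≥ 1, let M ∈ ℝ^{n×n} be symmetric positive definite, let λ be a scalar, and suppose U¹, U², P ∈ ℝ^{n×n} satisfy the mixed discrete eigenvalue system U¹ − U² + PM = λ U¹M, −U¹ + U² + MP = λ MU², and U¹M + MU² = 0. Then P = 0, and consequently (λ, U¹, U²) satisfies the unmixed system U¹ − U² = λU¹M and −U¹ + U² = λMU². Hence the eigen-solutions of the mixed discrete Maxwell eigenvalue problem corresponding to nonzero eigenvalues coincide with those of the unmixed discrete problem. -/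
open Matrix

lemma lyap_inj {n : ℕ} {M P : Matrix (Fin n) (Fin n) ℝ} (hM : M.PosDef)
    (h : P * M + M * P = 0) : P = 0 := by
  classical
  have hH := hM.isHermitian
  set U : Matrix (Fin n) (Fin n) ℝ := (hH.eigenvectorUnitary : Matrix (Fin n) (Fin n) ℝ) with hU
  have hUU : star U * U = 1 := (Matrix.mem_unitaryGroup_iff').mp hH.eigenvectorUnitary.2
  have hUU' : U * star U = 1 := (Matrix.mem_unitaryGroup_iff).mp hH.eigenvectorUnitary.2
  have hMspec : M = U * diagonal (RCLike.ofReal ∘ hH.eigenvalues) * star U :=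
    hH.spectral_theorem
  set d : Fin n → ℝ := hH.eigenvalues with hd
  have hdiag : (diagonal (RCLike.ofReal ∘ d) : Matrix (Fin n) (Fin n) ℝ) = diagonal d := by
    simp [Function.comp]
  rw [hdiag] at hMspec
  set Q : Matrix (Fin n) (Fin n) ℝ := star U * P * U with hQ
  have key : Q * diagonal d + diagonal d * Q = 0 := by
    have := congrArg (fun X => star U * X * U) h
    simp only [Matrix.mul_add, Matrix.add_mul, Matrix.mul_zero, Matrix.zero_mul] at this
    calc Q * diagonal d + diagonal d * Q
        = star U * (P * M) * U + star U * (M * P) * U := by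
          rw [hMspec]
          simp only [hQ, Matrix.mul_assoc]
          rw [show U * (diagonal d * (star U * U)) = U * diagonal d by rw [hUU]; simp [Matrix.mul_assoc],
            show star U * (U * (diagonal d * (star U * (P * U)))) =
              (star U * U) * (diagonal d * (star U * (P * U))) by simp [Matrix.mul_assoc]]
          rw [hUU]
          simp [Matrix.mul_assoc]
      _ = star U * (P * M + M * P) * U := by
          simp [Matrix.mul_add, Matrix.add_mul, Matrix.mul_assoc]
      _ = 0 := by rw [h]; simp
  have hQ0 : Q = 0 := by
    ext i j
    have := congrFun (congrFun key i) j
    simp only [Matrix.add_apply, Matrix.mul_diagonal, Matrix.diagonal_mul,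
      Matrix.zero_apply] at this
    have hdi : 0 < d i := hM.eigenvalues_pos i
    have hdj : 0 < d j := hM.eigenvalues_pos j
    have : Q i j * (d j + d i) = 0 := by ring_nf; linarith [this]
    have hne : d j + d i ≠ 0 := by positivity
    simpa [hne] using mul_eq_zero.mp this
  have : U * Q * star U = P := by
    rw [hQ]
    calc U * (star U * P * U) * star U = (U * star U) * P * (U * star U) := by
          simp [Matrix.mul_assoc]
      _ = P := by rw [hUU']; simp
  rw [← this, hQ0]
  simp

/-- In the mixed discrete Maxwell eigenvalue system with `M` SPD,
the Lagrange multiplier block `P` vanishes, and the eigen-equations reduce to the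
unmixed ones. -/
theorem stmt16 (n : ℕ) (hn : 1 ≤ n)
    (M : Matrix (Fin n) (Fin n) ℝ) (hM : M.PosDef)
    (lam : ℝ) (U1 U2 P : Matrix (Fin n) (Fin n) ℝ)
    (h1 : U1 - U2 + P * M = lam • (U1 * M))
    (h2 : -U1 + U2 + M * P = lam • (M * U2))
    (h3 : U1 * M + M * U2 = 0) :
    P = 0 ∧ U1 - U2 = lam • (U1 * M) ∧ -U1 + U2 = lam • (M * U2) := by
  have hsum : P * M + M * P = 0 := by
    have := congrArg₂ (· + ·) h1 h2
    have h3' : lam • (U1 * M) + lam • (M * U2) = 0 := by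
      rw [← smul_add, h3, smul_zero]
    calc P * M + M * P
        = (U1 - U2 + P * M) + (-U1 + U2 + M * P) := by abel
      _ = lam • (U1 * M) + lam • (M * U2) := this
      _ = 0 := h3'
  have hP : P = 0 := lyap_inj hM hsum
  refine ⟨hP, ?_, ?_⟩
  · simpa [hP] using h1
  · simpa [hP] using h2
end

section
/- Let a, b, c > 0 be real numbers, and consider the 3×3 generalized eigenvalue problem K x = λ B x, where K = [[b+c, −c, −b], [−c, a+c, −a], [−b, −a, a+b]] and B = diag(bc, ac, ab). Then: (i) λ = 0 is a generalized eigenvalue with one-dimensional eigenspace spanned by (1, 1, 1)ᵀ; (ii) λ* = 1/a + 1/b + 1/c is a generalized eigenvalue whose eigenspace is two-dimensional and spanned by (1, 0, −c/a)ᵀ and (0, 1, −c/b)ᵀ; and (iii) these are the only generalized eigenvalues: every nonzero x with K x = λ B x has λ ∈ {0, λ*}. Moreover, the λ*-eigenvectors x = (x₁, x₂, x₃) are exactly the nonzero solutions of the constraint bc·x₁ + ac·x₂ + ab·x₃ = 0. -/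
/-!
Multiplying the rows of `K x = λ B x` by `a`, `b`, `c` turns the problem into
`(D - λ a b c) x = (div x) • (1, 1, 1)`, where `D = ab + ac + bc = a b c λ*` and
`div x = bc x₀ + ac x₁ + ab x₂`. Applying `div` to both sides gives `λ a b c (div x) = 0`:
either `λ = 0`, and then `x` is a multiple of `(1, 1, 1)`, or `div x = 0`, and then `λ = λ*`.
-/

open Matrix

namespace MaxwellMode

variable {a b c : ℝ}

def stiffness (a b c : ℝ) : Matrix (Fin 3) (Fin 3) ℝ :=
  !![b + c, -c, -b; -c, a + c, -a; -b, -a, a + b]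

def mass (a b c : ℝ) : Matrix (Fin 3) (Fin 3) ℝ := diagonal ![b * c, a * c, a * b]

def discreteDiv (a b c : ℝ) (x : Fin 3 → ℝ) : ℝ := b * c * x 0 + a * c * x 1 + a * b * x 2

theorem mul_stiffness_mulVec (x : Fin 3 → ℝ) :
    ![a, b, c] * (stiffness a b c *ᵥ x) =
      (a * b + a * c + b * c) • x - discreteDiv a b c x • ![1, 1, 1] := by
  ext i : 1
  fin_cases i <;> simp [stiffness, discreteDiv, dotProduct, Fin.sum_univ_three] <;> ring

theorem mul_mass_mulVec (x : Fin 3 → ℝ) :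
    ![a, b, c] * (mass a b c *ᵥ x) = (a * b * c) • x := by
  ext i : 1
  fin_cases i <;> simp [mass, mulVec_diagonal] <;> ring

theorem mulVec_eq_smul_mass_iff (ha : a ≠ 0) (hb : b ≠ 0) (hc : c ≠ 0) (lam : ℝ)
    (x : Fin 3 → ℝ) :
    stiffness a b c *ᵥ x = lam • mass a b c *ᵥ x ↔
      (a * b + a * c + b * c - lam * (a * b * c)) • x =
        discreteDiv a b c x • ![1, 1, 1] := by
  have hunit : IsUnit ![a, b, c] := by
    simp [Pi.isUnit_iff, Fin.forall_fin_succ, ha, hb, hc]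
  rw [← hunit.mul_right_inj, mul_smul_comm, mul_stiffness_mulVec, mul_mass_mulVec, sub_smul,
    smul_smul, sub_eq_iff_eq_add, sub_eq_iff_eq_add', add_comm]

theorem discreteDiv_smul (r : ℝ) (x : Fin 3 → ℝ) :
    discreteDiv a b c (r • x) = r * discreteDiv a b c x := by
  simp only [discreteDiv, Pi.smul_apply, smul_eq_mul]; ring

theorem discreteDiv_smul_ones (t : ℝ) :
    discreteDiv a b c (t • ![1, 1, 1]) = (a * b + a * c + b * c) * t := by
  simp only [discreteDiv, Pi.smul_apply, smul_eq_mul, cons_val_zero, cons_val_one,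
    cons_val_two, tail_cons, head_cons, mul_one]
  ring

theorem discreteDiv_eq_zero_iff (ha : a ≠ 0) (hb : b ≠ 0) (x : Fin 3 → ℝ) :
    discreteDiv a b c x = 0 ↔
      ∃ s t : ℝ, x = s • ![1, 0, -(c / a)] + t • ![0, 1, -(c / b)] := by
  constructor
  · intro h
    rw [discreteDiv] at h
    refine ⟨x 0, x 1, funext fun i => ?_⟩
    fin_cases i
    · simp
    · simp
    · simp only [Fin.reduceFinMk, Pi.add_apply, Pi.smul_apply, smul_eq_mul, cons_val_two,
        tail_cons, head_cons]
      field_simp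
      linear_combination h
  · rintro ⟨s, t, rfl⟩
    simp only [discreteDiv, Pi.add_apply, Pi.smul_apply, smul_eq_mul, cons_val_zero,
      cons_val_one, cons_val_two, tail_cons, head_cons]
    field_simp
    ring

theorem mulVec_eq_zero_smul_mass_iff (ha : a ≠ 0) (hb : b ≠ 0) (hc : c ≠ 0)
    (hD : a * b + a * c + b * c ≠ 0) (x : Fin 3 → ℝ) :
    stiffness a b c *ᵥ x = (0 : ℝ) • mass a b c *ᵥ x ↔
      ∃ t : ℝ, x = t • ![1, 1, 1] := by
  rw [mulVec_eq_smul_mass_iff ha hb hc, zero_mul, sub_zero]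
  constructor
  · intro h
    refine ⟨discreteDiv a b c x / (a * b + a * c + b * c), ?_⟩
    rw [div_eq_inv_mul, mul_smul, ← h, inv_smul_smul₀ hD]
  · rintro ⟨t, rfl⟩
    rw [discreteDiv_smul_ones, smul_smul]

theorem mulVec_eq_lamStar_smul_mass_iff (ha : a ≠ 0) (hb : b ≠ 0) (hc : c ≠ 0)
    (x : Fin 3 → ℝ) :
    stiffness a b c *ᵥ x = (1 / a + 1 / b + 1 / c) • mass a b c *ᵥ x ↔
      discreteDiv a b c x = 0 := by
  have hD : a * b + a * c + b * c - (1 / a + 1 / b + 1 / c) * (a * b * c) = 0 := by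
    field_simp; ring
  rw [mulVec_eq_smul_mass_iff ha hb hc, hD, zero_smul, eq_comm, smul_eq_zero]
  simp

theorem eq_zero_or_eq_lamStar_of_mulVec_eq (ha : a ≠ 0) (hb : b ≠ 0) (hc : c ≠ 0)
    {lam : ℝ} {x : Fin 3 → ℝ} (hx : x ≠ 0)
    (h : stiffness a b c *ᵥ x = lam • mass a b c *ᵥ x) :
    lam = 0 ∨ lam = 1 / a + 1 / b + 1 / c := by
  rw [mulVec_eq_smul_mass_iff ha hb hc] at h
  have hdiv : lam * (a * b * c) * discreteDiv a b c x = 0 := by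
    have := congrArg (discreteDiv a b c) h
    rw [discreteDiv_smul, discreteDiv_smul_ones] at this
    linear_combination -this
  rcases mul_eq_zero.mp hdiv with hlam | hdiv_zero
  · left
    simpa [ha, hb, hc] using hlam
  · right
    rw [hdiv_zero, zero_smul, smul_eq_zero] at h
    have hD := h.resolve_right hx
    field_simp
    linear_combination -hD

theorem linearIndependent_divFreeBasis :
    LinearIndependent ℝ ![![(1 : ℝ), 0, -(c / a)], ![0, 1, -(c / b)]] := by
  exact linearIndependent_fin2.mpr
    ⟨fun h => by simpa using congrFun h 1, fun r h => by simpa using congrFun h 0⟩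

end MaxwellMode

/-- For `a, b, c > 0`, the 3×3 generalized eigenvalue problem
`K x = λ B x` with `K = [[b+c,-c,-b],[-c,a+c,-a],[-b,-a,a+b]]` and
`B = diag(bc, ac, ab)` has exactly the generalized eigenvalues `0` (with
one-dimensional eigenspace spanned by `(1,1,1)ᵀ`) and `λ* = 1/a + 1/b + 1/c`
(with two-dimensional eigenspace spanned by `(1,0,-c/a)ᵀ` and `(0,1,-c/b)ᵀ`);
moreover the `λ*`-eigenvectors are exactly the nonzero solutions of
`bc·x₁ + ac·x₂ + ab·x₃ = 0`. -/
theorem stmt17 (a b c : ℝ) (ha : 0 < a) (hb : 0 < b) (hc : 0 < c) :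
    let K : Matrix (Fin 3) (Fin 3) ℝ :=
      !![b + c, -c, -b; -c, a + c, -a; -b, -a, a + b]
    let B : Matrix (Fin 3) (Fin 3) ℝ := Matrix.diagonal ![b * c, a * c, a * b]
    let lamStar : ℝ := 1 / a + 1 / b + 1 / c
    -- (i) λ = 0 is a generalized eigenvalue with eigenspace spanned by (1,1,1)ᵀ
    ((∀ x : Fin 3 → ℝ, K.mulVec x = (0 : ℝ) • B.mulVec x ↔
        ∃ t : ℝ, x = t • ![1, 1, 1]) ∧
    -- (ii) λ* is a generalized eigenvalue with two-dimensional eigenspace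
    (∀ x : Fin 3 → ℝ, K.mulVec x = lamStar • B.mulVec x ↔
        ∃ s t : ℝ, x = s • ![1, 0, -(c / a)] + t • ![0, 1, -(c / b)]) ∧
    LinearIndependent ℝ ![![(1 : ℝ), 0, -(c / a)], ![0, 1, -(c / b)]] ∧
    -- (iii) every generalized eigenvalue is 0 or λ*
    (∀ (lam : ℝ) (x : Fin 3 → ℝ), x ≠ 0 → K.mulVec x = lam • B.mulVec x →
        lam = 0 ∨ lam = lamStar) ∧
    -- the λ*-eigenvectors are exactly the nonzero solutions of the constraint
    (∀ x : Fin 3 → ℝ, x ≠ 0 →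
        (K.mulVec x = lamStar • B.mulVec x ↔
          b * c * x 0 + a * c * x 1 + a * b * x 2 = 0))) := by
  intro K B lamStar
  have hD : a * b + a * c + b * c ≠ 0 := by positivity
  have lamStar_iff := MaxwellMode.mulVec_eq_lamStar_smul_mass_iff ha.ne' hb.ne' hc.ne'
  exact ⟨MaxwellMode.mulVec_eq_zero_smul_mass_iff ha.ne' hb.ne' hc.ne' hD,
    fun x => (lamStar_iff x).trans (MaxwellMode.discreteDiv_eq_zero_iff ha.ne' hb.ne' x),
    MaxwellMode.linearIndependent_divFreeBasis,
    fun _ _ hx h => MaxwellMode.eq_zero_or_eq_lamStar_of_mulVec_eq ha.ne' hb.ne' hc.ne' hx h,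
    fun x _ => lamStar_iff x⟩
end

section
/- Let M ∈ ℝ^{n×n} be symmetric positive definite with M = Q D Qᵀ, Q orthogonal, D = diag(d₁, …, d_n), d_i > 0. Define the linear operator L on the space of third-order tensors ℝ^{n×n×n} by (L T)_{ijk} = Σ_{a,b} M_{ia} M_{jb} T_{abk} + Σ_{a,c} M_{ia} M_{kc} T_{ajc} + Σ_{b,c} M_{jb} M_{kc} T_{ibc} (i.e. L corresponds to M⊗M⊗I + M⊗I⊗M + I⊗M⊗M). Given G ∈ ℝ^{n×n×n}, let Ĝ be obtained by applying Qᵀ to G along each of the three tensor modes, define P̂_{ijk} = Ĝ_{ijk}/(d_j d_k + d_i d_k + d_i d_j), and let P be obtained by applying Q to P̂ along each mode. Then P is the unique solution of L P = G. -/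
open Matrix Finset

noncomputable section

/-- The operator `L = M⊗M⊗I + M⊗I⊗M + I⊗M⊗M` on third-order tensors:
`(L T)_{ijk} = Σ_{a,b} M_{ia}M_{jb}T_{abk} + Σ_{a,c} M_{ia}M_{kc}T_{ajc}
  + Σ_{b,c} M_{jb}M_{kc}T_{ibc}`. -/
def Lop (n : ℕ) (M : Matrix (Fin n) (Fin n) ℝ)
    (T : Fin n → Fin n → Fin n → ℝ) : Fin n → Fin n → Fin n → ℝ :=
  fun i j k =>
    (∑ a, ∑ b, M i a * M j b * T a b k)
    + (∑ a, ∑ c, M i a * M k c * T a j c)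
    + (∑ b, ∑ c, M j b * M k c * T i b c)

/-- Application of a matrix `A` along each of the three modes of a tensor. -/
def modeAll (n : ℕ) (A : Matrix (Fin n) (Fin n) ℝ)
    (T : Fin n → Fin n → Fin n → ℝ) : Fin n → Fin n → Fin n → ℝ :=
  fun i j k => ∑ a, ∑ b, ∑ c, A i a * A j b * A k c * T a b c

namespace Stmt18Aux

variable {n : ℕ}

abbrev Tens (n : ℕ) := Fin n → Fin n → Fin n → ℝ

def m1 (A : Matrix (Fin n) (Fin n) ℝ) (T : Tens n) : Tens n :=
  fun i j k => ∑ a, A i a * T a j k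
def m2 (A : Matrix (Fin n) (Fin n) ℝ) (T : Tens n) : Tens n :=
  fun i j k => ∑ b, A j b * T i b k
def m3 (A : Matrix (Fin n) (Fin n) ℝ) (T : Tens n) : Tens n :=
  fun i j k => ∑ c, A k c * T i j c
def sc1 (d : Fin n → ℝ) (T : Tens n) : Tens n := fun i j k => d i * T i j k
def sc2 (d : Fin n → ℝ) (T : Tens n) : Tens n := fun i j k => d j * T i j k
def sc3 (d : Fin n → ℝ) (T : Tens n) : Tens n := fun i j k => d k * T i j k

variable (A B : Matrix (Fin n) (Fin n) ℝ) (d : Fin n → ℝ) (T : Tens n)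

lemma m1_m1 : m1 A (m1 B T) = m1 (A * B) T := by
  funext i j k
  simp only [m1, Matrix.mul_apply, Finset.mul_sum, Finset.sum_mul]
  rw [Finset.sum_comm]
  exact Finset.sum_congr rfl fun p _ => Finset.sum_congr rfl fun a _ => by ring

lemma m2_m2 : m2 A (m2 B T) = m2 (A * B) T := by
  funext i j k
  simp only [m2, Matrix.mul_apply, Finset.mul_sum, Finset.sum_mul]
  rw [Finset.sum_comm]
  exact Finset.sum_congr rfl fun p _ => Finset.sum_congr rfl fun a _ => by ring

lemma m3_m3 : m3 A (m3 B T) = m3 (A * B) T := by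
  funext i j k
  simp only [m3, Matrix.mul_apply, Finset.mul_sum, Finset.sum_mul]
  rw [Finset.sum_comm]
  exact Finset.sum_congr rfl fun p _ => Finset.sum_congr rfl fun a _ => by ring

lemma m2_m1 : m2 A (m1 B T) = m1 B (m2 A T) := by
  funext i j k
  simp only [m1, m2, Finset.mul_sum]
  rw [Finset.sum_comm]
  exact Finset.sum_congr rfl fun p _ => Finset.sum_congr rfl fun a _ => by ring

lemma m3_m1 : m3 A (m1 B T) = m1 B (m3 A T) := by
  funext i j k
  simp only [m1, m3, Finset.mul_sum]
  rw [Finset.sum_comm]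
  exact Finset.sum_congr rfl fun p _ => Finset.sum_congr rfl fun a _ => by ring

lemma m3_m2 : m3 A (m2 B T) = m2 B (m3 A T) := by
  funext i j k
  simp only [m2, m3, Finset.mul_sum]
  rw [Finset.sum_comm]
  exact Finset.sum_congr rfl fun p _ => Finset.sum_congr rfl fun a _ => by ring

lemma m1_diag : m1 (A * Matrix.diagonal d) T = m1 A (sc1 d T) := by
  funext i j k
  exact Finset.sum_congr rfl fun a _ => by
    rw [Matrix.mul_diagonal]; simp [sc1]; ring

lemma m2_diag : m2 (A * Matrix.diagonal d) T = m2 A (sc2 d T) := by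
  funext i j k
  exact Finset.sum_congr rfl fun a _ => by
    rw [Matrix.mul_diagonal]; simp [sc2]; ring

lemma m3_diag : m3 (A * Matrix.diagonal d) T = m3 A (sc3 d T) := by
  funext i j k
  exact Finset.sum_congr rfl fun a _ => by
    rw [Matrix.mul_diagonal]; simp [sc3]; ring

lemma sc1_m2 : sc1 d (m2 A T) = m2 A (sc1 d T) := by
  funext i j k; simp only [sc1, m2, Finset.mul_sum]
  exact Finset.sum_congr rfl fun a _ => by ring

lemma sc1_m3 : sc1 d (m3 A T) = m3 A (sc1 d T) := by
  funext i j k; simp only [sc1, m3, Finset.mul_sum]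
  exact Finset.sum_congr rfl fun a _ => by ring

lemma sc2_m3 : sc2 d (m3 A T) = m3 A (sc2 d T) := by
  funext i j k; simp only [sc2, m3, Finset.mul_sum]
  exact Finset.sum_congr rfl fun a _ => by ring

lemma m1_one : m1 (1 : Matrix (Fin n) (Fin n) ℝ) T = T := by
  funext i j k; simp [m1, Matrix.one_apply]

lemma m2_one : m2 (1 : Matrix (Fin n) (Fin n) ℝ) T = T := by
  funext i j k; simp [m2, Matrix.one_apply]

lemma m3_one : m3 (1 : Matrix (Fin n) (Fin n) ℝ) T = T := by
  funext i j k; simp [m3, Matrix.one_apply]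

lemma modeAll_eq : modeAll n A T = m1 A (m2 A (m3 A T)) := by
  funext i j k
  simp only [modeAll, m1, m2, m3, Finset.mul_sum]
  exact Finset.sum_congr rfl fun a _ => Finset.sum_congr rfl fun b _ =>
    Finset.sum_congr rfl fun c _ => by ring

lemma modeAll_modeAll : modeAll n A (modeAll n B T) = modeAll n (A * B) T := by
  rw [modeAll_eq, modeAll_eq, modeAll_eq, m3_m1, m3_m2, m3_m3, m2_m1, m2_m2, m1_m1]

lemma Lop_eq (M : Matrix (Fin n) (Fin n) ℝ) :
    Lop n M T = fun i j k =>
      m1 M (m2 M T) i j k + m1 M (m3 M T) i j k + m2 M (m3 M T) i j k := by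
  funext i j k
  simp only [Lop, m1, m2, m3, Finset.mul_sum, mul_assoc]

variable (M Q : Matrix (Fin n) (Fin n) ℝ)

lemma modeAll_add3 (X Y Z : Tens n) :
    (fun i j k => modeAll n A X i j k + modeAll n A Y i j k + modeAll n A Z i j k)
      = modeAll n A (fun a b c => X a b c + Y a b c + Z a b c) := by
  funext i j k
  simp only [modeAll, ← Finset.sum_add_distrib, mul_add]

lemma modeAll_one (T : Tens n) : modeAll n (1 : Matrix (Fin n) (Fin n) ℝ) T = T := by
  rw [modeAll_eq, m1_one, m2_one, m3_one]

lemma LopQ (hMQ : M * Q = Q * Matrix.diagonal d) (T : Tens n) :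
    Lop n M (modeAll n Q T)
      = modeAll n Q (fun a b c => (d b * d c + d a * d c + d a * d b) * T a b c) := by
  have t1 : m1 M (m2 M (modeAll n Q T)) = modeAll n Q (sc1 d (sc2 d T)) := by
    rw [modeAll_eq, m2_m1, m2_m2, m1_m1, hMQ, m1_diag, m2_diag, sc1_m2, sc2_m3, sc1_m3,
      ← modeAll_eq]
  have t2 : m1 M (m3 M (modeAll n Q T)) = modeAll n Q (sc1 d (sc3 d T)) := by
    rw [modeAll_eq, m3_m1, m3_m2, m3_m3, m1_m1, hMQ, m1_diag, m3_diag, sc1_m2, sc1_m3,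
      ← modeAll_eq]
  have t3 : m2 M (m3 M (modeAll n Q T)) = modeAll n Q (sc2 d (sc3 d T)) := by
    rw [modeAll_eq, m3_m1, m3_m2, m3_m3, hMQ, m3_diag, m2_m1, m2_m2, hMQ, m2_diag, sc2_m3,
      ← modeAll_eq]
  rw [Lop_eq, t1, t2, t3, modeAll_add3]
  have h : (fun a b c => sc1 d (sc2 d T) a b c + sc1 d (sc3 d T) a b c + sc2 d (sc3 d T) a b c)
      = (fun a b c : Fin n => (d b * d c + d a * d c + d a * d b) * T a b c) := by
    funext a b c; simp only [sc1, sc2, sc3]; ring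
  rw [h]

end Stmt18Aux


open Stmt18Aux in
/-- With `M = Q D Qᵀ` SPD (`Q` orthogonal, `d i > 0`), the tensor
`P` obtained by transforming `G` to the eigenbasis along each mode, dividing entrywise
by `d_j d_k + d_i d_k + d_i d_j`, and transforming back, is the unique solution of
`L P = G`. -/
theorem stmt18 (n : ℕ) (M Q : Matrix (Fin n) (Fin n) ℝ) (d : Fin n → ℝ)
    (hd : ∀ i, 0 < d i)
    (hQ : Q * Qᵀ = 1) (hQ' : Qᵀ * Q = 1)
    (hM : M = Q * Matrix.diagonal d * Qᵀ)
    (G P : Fin n → Fin n → Fin n → ℝ)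
    (hP : P = modeAll n Q (fun i j k =>
      modeAll n Qᵀ G i j k / (d j * d k + d i * d k + d i * d j))) :
    Lop n M P = G ∧
    ∀ P' : Fin n → Fin n → Fin n → ℝ, Lop n M P' = G → P' = P := by
  have hMQ : M * Q = Q * Matrix.diagonal d := by
    rw [hM, Matrix.mul_assoc, hQ', Matrix.mul_one]
  have hden : ∀ a b c : Fin n, d b * d c + d a * d c + d a * d b ≠ 0 := by
    intro a b c
    have h1 := mul_pos (hd b) (hd c)
    have h2 := mul_pos (hd a) (hd c)
    have h3 := mul_pos (hd a) (hd b)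
    positivity
  have hcomp : ∀ X : Tens n, modeAll n Q (modeAll n Qᵀ X) = X := fun X => by
    rw [modeAll_modeAll, hQ, modeAll_one]
  have hcomp' : ∀ X : Tens n, modeAll n Qᵀ (modeAll n Q X) = X := fun X => by
    rw [modeAll_modeAll, hQ', modeAll_one]
  constructor
  · rw [hP, LopQ d M Q hMQ]
    have h : (fun a b c : Fin n => (d b * d c + d a * d c + d a * d b) *
        (modeAll n Qᵀ G a b c / (d b * d c + d a * d c + d a * d b))) = modeAll n Qᵀ G := by
      funext a b c
      rw [mul_comm, div_mul_cancel₀ _ (hden a b c)]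
    rw [h, hcomp]
  · intro P' hLP
    have e1 : P' = modeAll n Q (modeAll n Qᵀ P') := (hcomp P').symm
    rw [e1, LopQ d M Q hMQ] at hLP
    have e2 := congrArg (modeAll n Qᵀ) hLP
    rw [hcomp'] at e2
    have e3 : modeAll n Qᵀ P' = fun a b c =>
        modeAll n Qᵀ G a b c / (d b * d c + d a * d c + d a * d b) := by
      funext a b c
      have h := congrFun (congrFun (congrFun e2 a) b) c
      rw [eq_div_iff (hden a b c), mul_comm]
      exact h
    rw [e1, e3, hP]
end
end

section
/- Let d_i, d_j, d_k > 0, let κ be a scalar, set S = d_j d_k + d_i d_k + d_i d_j and T = S + κ d_i d_j d_k, and assume T ≠ 0. Given scalars f₁, f₂, f₃, r, the 4×4 linear system (d_j + d_k + κd_jd_k)u₁ − d_k u₂ − d_j u₃ + d_jd_k p = f₁; −d_k u₁ + (d_i + d_k + κd_id_k)u₂ − d_i u₃ + d_id_k p = f₂; −d_j u₁ − d_i u₂ + (d_i + d_j + κd_id_j)u₃ + d_id_j p = f₃; d_jd_k u₁ + d_id_k u₂ + d_id_j u₃ = r, is solved by p = (f₁ + f₂ + f₃ − κr)/S, u₁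 = (r + d_i f₁ − d_i d_j d_k p)/T, u₂ = (r + d_j f₂ − d_i d_j d_k p)/T, u₃ = (r + d_k f₃ − d_i d_j d_k p)/T, and this solution is unique. -/
/-!
Adding the first three equations cancels the double-curl part (its columns sum to zero), and
subtracting `κ` times the constraint leaves `S p = f₁ + f₂ + f₃ - κ r`. Adding the constraint to
`dᵢ` times the first equation leaves `T u₁ = r + dᵢ f₁ - dᵢ dⱼ dₖ p`, and likewise for `u₂`, `u₃`.
Conversely these four diagonal equations give back the system once `T ≠ 0`, so for `S, T ≠ 0`
the system is equivalent to the explicit formulas.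
-/

section ModeSystem

variable {K : Type*} [Field K] (di dj dk κ f1 f2 f3 r S T : K)

def ModeSystem (p u1 u2 u3 : K) : Prop :=
  (dj + dk + κ * dj * dk) * u1 - dk * u2 - dj * u3 + dj * dk * p = f1 ∧
  -(dk * u1) + (di + dk + κ * di * dk) * u2 - di * u3 + di * dk * p = f2 ∧
  -(dj * u1) - di * u2 + (di + dj + κ * di * dj) * u3 + di * dj * p = f3 ∧
  dj * dk * u1 + di * dk * u2 + di * dj * u3 = r

variable {di dj dk κ f1 f2 f3 r S T}

theorem modeSystem_iff_diagonal (hS : S = dj * dk + di * dk + di * dj)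
    (hT : T = S + κ * (di * dj * dk)) (hT0 : T ≠ 0) {p u1 u2 u3 : K} :
    ModeSystem di dj dk κ f1 f2 f3 r p u1 u2 u3 ↔
      S * p = f1 + f2 + f3 - κ * r ∧
      T * u1 = r + di * f1 - di * dj * dk * p ∧
      T * u2 = r + dj * f2 - di * dj * dk * p ∧
      T * u3 = r + dk * f3 - di * dj * dk * p := by
  subst hS hT
  constructor
  · rintro ⟨e1, e2, e3, e4⟩
    exact ⟨by linear_combination e1 + e2 + e3 - κ * e4,
      by linear_combination di * e1 + e4,
      by linear_combination dj * e2 + e4,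
      by linear_combination dk * e3 + e4⟩
  · rintro ⟨hp, h1, h2, h3⟩
    refine ⟨mul_left_cancel₀ hT0 ?_, mul_left_cancel₀ hT0 ?_, mul_left_cancel₀ hT0 ?_,
      mul_left_cancel₀ hT0 ?_⟩
    · linear_combination (dj + dk + κ * dj * dk) * h1 - dk * h2 - dj * h3 + dj * dk * hp
    · linear_combination -dk * h1 + (di + dk + κ * di * dk) * h2 - di * h3 + di * dk * hp
    · linear_combination -dj * h1 - di * h2 + (di + dj + κ * di * dj) * h3 + di * dj * hp
    · linear_combination dj * dk * h1 + di * dk * h2 + di * dj * h3 - di * dj * dk * hp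

theorem modeSystem_iff_eq_div (hS : S = dj * dk + di * dk + di * dj)
    (hT : T = S + κ * (di * dj * dk)) (hS0 : S ≠ 0) (hT0 : T ≠ 0) {p u1 u2 u3 : K} :
    ModeSystem di dj dk κ f1 f2 f3 r p u1 u2 u3 ↔
      p = (f1 + f2 + f3 - κ * r) / S ∧
      u1 = (r + di * f1 - di * dj * dk * p) / T ∧
      u2 = (r + dj * f2 - di * dj * dk * p) / T ∧
      u3 = (r + dk * f3 - di * dj * dk * p) / T := by
  simp only [modeSystem_iff_diagonal hS hT hT0, eq_div_iff hS0, eq_div_iff hT0, mul_comm S,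
    mul_comm T]

end ModeSystem

/-- The per-mode 4×4 system of the 3D Maxwell fast solver:
with `d_i, d_j, d_k > 0`, `S = d_jd_k + d_id_k + d_id_j`, `T = S + κ d_id_jd_k ≠ 0`,
the explicit formulas for `p, u₁, u₂, u₃` solve the system, and the solution is
unique. -/
theorem stmt19 (di dj dk κ f1 f2 f3 r : ℝ)
    (hdi : 0 < di) (hdj : 0 < dj) (hdk : 0 < dk)
    (S T : ℝ)
    (hS : S = dj * dk + di * dk + di * dj)
    (hT : T = S + κ * (di * dj * dk))
    (hT0 : T ≠ 0)
    (p u1 u2 u3 : ℝ)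
    (hp : p = (f1 + f2 + f3 - κ * r) / S)
    (hu1 : u1 = (r + di * f1 - di * dj * dk * p) / T)
    (hu2 : u2 = (r + dj * f2 - di * dj * dk * p) / T)
    (hu3 : u3 = (r + dk * f3 - di * dj * dk * p) / T) :
    ((dj + dk + κ * dj * dk) * u1 - dk * u2 - dj * u3 + dj * dk * p = f1 ∧
     -(dk * u1) + (di + dk + κ * di * dk) * u2 - di * u3 + di * dk * p = f2 ∧
     -(dj * u1) - di * u2 + (di + dj + κ * di * dj) * u3 + di * dj * p = f3 ∧
     dj * dk * u1 + di * dk * u2 + di * dj * u3 = r) ∧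
    ∀ p' u1' u2' u3' : ℝ,
      ((dj + dk + κ * dj * dk) * u1' - dk * u2' - dj * u3' + dj * dk * p' = f1 ∧
       -(dk * u1') + (di + dk + κ * di * dk) * u2' - di * u3' + di * dk * p' = f2 ∧
       -(dj * u1') - di * u2' + (di + dj + κ * di * dj) * u3' + di * dj * p' = f3 ∧
       dj * dk * u1' + di * dk * u2' + di * dj * u3' = r) →
      p' = p ∧ u1' = u1 ∧ u2' = u2 ∧ u3' = u3 := by
  have hS0 : S ≠ 0 := by rw [hS]; positivity
  refine ⟨(modeSystem_iff_eq_div hS hT hS0 hT0).2 ⟨hp, hu1, hu2, hu3⟩,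
    fun p' u1' u2' u3' h => ?_⟩
  obtain ⟨rfl, rfl, rfl, rfl⟩ := (modeSystem_iff_eq_div hS hT hS0 hT0).1 h
  subst hp hu1 hu2 hu3
  exact ⟨rfl, rfl, rfl, rfl⟩
end
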